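/- arXiv:1504.06671 — 6 statements merged into one kernel-verified Lean document; each statement's English description precedes it below -/
import Mathlib

section
/- Let φ ∈ O_K[x] be an Eisenstein polynomial of degree n = e_0·p^m with p ∤ e_0, α a root of φ, and ρ(x) = Σ ρ_i x^i its ramification polynomial. Then: (a) for p^{v_p(n)} ≤ i ≤ n one has v_α(ρ_i) = 0 if and only if v_α(C(n,i)) = 0, and in that case ρ_i ≡ C(n,i) mod (α); (b) if (p^s, J) is a point on the ramification polygon of φ (so v_α(ρ_{p^s}) = J) with J = a·n + b, 0 < b < n, then ρ_{p^s} ∼ φ_b · C(b, p^s) · α^{b−n}. -/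
open Polynomial

namespace RamificationStmt4

variable {K L : Type*} [Field K] [Field L]

def IsEisenstein (v : AddValuation K (WithTop ℤ)) (φ : Polynomial K) : Prop :=
  φ.Monic ∧ (∀ i < φ.natDegree, ((1 : ℤ) : WithTop ℤ) ≤ v (φ.coeff i)) ∧
    v (φ.coeff 0) = ((1 : ℤ) : WithTop ℤ)

/-- Coefficients of the ramification polynomial `ρ(x) = φ(αx+α)/α^n`:
`ρ_i = ∑_{k=i}^n C(k,i) φ_k α^{k-n}`. -/
noncomputable def rho [Algebra K L] (φ : Polynomial K) (α : L) (n i : ℕ) : L :=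
  ∑ k ∈ Finset.Icc i n, (Nat.choose k i : L) * (algebraMap K L (φ.coeff k)) * α ^ ((k : ℤ) - (n : ℤ))

/-- `(x0, J)` is a point on the ramification polygon, i.e. on the lower convex hull of the
points `(i, v_α(ρ_i))`, `1 ≤ i ≤ n`: its ordinate is `v_α(ρ_{x0}) = J` and there is a supporting
line through `(x0, J)` lying on or below all the points `(i, v_α(ρ_i))`. -/
def OnRamPolygon (w : AddValuation L (WithTop ℤ)) (ρ : ℕ → L) (n x0 : ℕ) (J : ℤ) : Prop :=
  w (ρ x0) = (J : WithTop ℤ) ∧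
    ∃ lam : ℚ, ∀ i : ℕ, 1 ≤ i → i ≤ n → ∀ c : ℤ, w (ρ i) = (c : WithTop ℤ) →
      (J : ℚ) + lam * ((i : ℚ) - (x0 : ℚ)) ≤ (c : ℚ)

end RamificationStmt4

/-- If the terms of a finite sum have pairwise distinct (finite) valuations and the sum has
valuation `J`, then a unique term has valuation `J` and all others have strictly larger
valuation. -/
private lemma key_min {L : Type*} [Field L] (w : AddValuation L (WithTop ℤ))
    (s : Finset ℕ) (f : ℕ → L) (J : ℤ)
    (hsum : w (∑ k ∈ s, f k) = ((J : ℤ) : WithTop ℤ))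
    (hdist : ∀ k ∈ s, ∀ k' ∈ s, k ≠ k' → w (f k) ≠ ⊤ → w (f k') ≠ ⊤ → w (f k) ≠ w (f k')) :
    ∃ k₀ ∈ s, w (f k₀) = ((J : ℤ) : WithTop ℤ) ∧
      ∀ k ∈ s, k ≠ k₀ → ((J : ℤ) : WithTop ℤ) < w (f k) := by
  classical
  set s' := s.filter (fun k => w (f k) ≠ ⊤) with hs'
  have hs'ne : s'.Nonempty := by
    by_contra h
    have hall : ∀ k ∈ s, f k = 0 := by
      intro k hk
      by_contra hfk
      exact h ⟨k, Finset.mem_filter.mpr ⟨hk, (w.ne_top_iff).mpr hfk⟩⟩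
    rw [Finset.sum_eq_zero hall] at hsum
    simp at hsum
  obtain ⟨k₀, hk₀s', hmin⟩ := s'.exists_min_image (fun k => w (f k)) hs'ne
  have hk₀s : k₀ ∈ s := (Finset.mem_filter.mp hk₀s').1
  have hk₀top : w (f k₀) ≠ ⊤ := (Finset.mem_filter.mp hk₀s').2
  have hlt : ∀ k ∈ s, k ≠ k₀ → w (f k₀) < w (f k) := by
    intro k hk hne
    by_cases htop : w (f k) = ⊤
    · rw [htop]
      exact lt_of_le_of_ne le_top hk₀top
    · exact lt_of_le_of_ne (hmin k (Finset.mem_filter.mpr ⟨hk, htop⟩))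
        (hdist k₀ hk₀s k hk (Ne.symm hne) hk₀top htop)
  have hsum_eq : w (∑ k ∈ s, f k) = w (f k₀) := by
    rw [← Finset.add_sum_erase s f hk₀s]
    apply w.map_add_eq_of_lt_left
    apply w.map_lt_sum hk₀top
    intro k hk
    exact hlt k (Finset.mem_of_mem_erase hk) (Finset.ne_of_mem_erase hk)
  have hJ0 : w (f k₀) = ((J : ℤ) : WithTop ℤ) := hsum_eq ▸ hsum
  refine ⟨k₀, hk₀s, hJ0, ?_⟩
  intro k hk hne
  rw [← hJ0]
  exact hlt k hk hne

open RamificationStmt4 in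
theorem stmt4 {p : ℕ} (hp : p.Prime) {K L : Type*} [Field K] [CharZero K] [Field L] [Algebra K L]
    (v : AddValuation K (WithTop ℤ)) (π : K) (hπ : v π = ((1 : ℤ) : WithTop ℤ))
    (hresidue_char : 0 < v (p : K))
    (w : AddValuation L (WithTop ℤ))
    (φ : Polynomial K) (n e0 m : ℕ) (hn : 0 < n) (hfact : n = e0 * p ^ m) (he0 : ¬ p ∣ e0)
    (hdeg : φ.natDegree = n) (hEis : IsEisenstein v φ)
    (α : L) (hroot : Polynomial.aeval α φ = 0) (hα : w α = ((1 : ℤ) : WithTop ℤ))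
    (hcompat : ∀ x : K, w (algebraMap K L x) = n • v x) :
    (∀ i : ℕ, p ^ m ≤ i → i ≤ n →
        ((w (rho φ α n i) = (0 : WithTop ℤ) ↔ w ((Nat.choose n i : L)) = (0 : WithTop ℤ)) ∧
          (w ((Nat.choose n i : L)) = (0 : WithTop ℤ) →
            ((1 : ℤ) : WithTop ℤ) ≤ w (rho φ α n i - (Nat.choose n i : L))))) ∧
    (∀ s : ℕ, ∀ a : ℤ, ∀ b : ℕ, 0 < b → b < n →
        OnRamPolygon w (fun i => rho φ α n i) n (p ^ s) (a * n + b) →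
        w (rho φ α n (p ^ s))
          < w (rho φ α n (p ^ s) -
              (Nat.choose b (p ^ s) : L) * algebraMap K L (φ.coeff b) * α ^ ((b : ℤ) - (n : ℤ)))) := by
  obtain ⟨hmonic, hEis1, hEis0⟩ := hEis
  haveI : CharZero L := charZero_of_injective_algebraMap (algebraMap K L).injective
  -- basic facts
  have hpow : ∀ k : ℕ, w (α ^ k) = ((k : ℤ) : WithTop ℤ) := by
    intro k
    rw [w.map_pow, hα, ← WithTop.coe_nsmul]
    norm_cast
    simp
  have hzpow : ∀ z : ℤ, w (α ^ z) = ((z : ℤ) : WithTop ℤ) := by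
    intro z
    cases z with
    | ofNat k =>
        rw [Int.ofNat_eq_coe, zpow_natCast, hpow k]
    | negSucc k =>
        rw [zpow_negSucc, w.map_inv, hpow (k + 1)]
        rw [Int.negSucc_eq]
        norm_cast
  have hnatK : ∀ N : ℕ, (0 : WithTop ℤ) ≤ v (N : K) := by
    intro N
    induction N with
    | zero => simp
    | succ N ih =>
        have h := v.map_add (N : K) 1
        have h1 : ((N : K) + 1) = ((N + 1 : ℕ) : K) := by push_cast; ring
        rw [h1] at h
        refine le_trans ?_ h
        rw [v.map_one]
        exact le_min ih le_rfl
  have hwC : ∀ N : ℕ, w ((N : L)) = n • v ((N : K)) := by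
    intro N
    rw [← map_natCast (algebraMap K L) N, hcompat]
  have hnatL : ∀ N : ℕ, (0 : WithTop ℤ) ≤ w ((N : L)) := by
    intro N
    rw [hwC]
    exact nsmul_nonneg (hnatK N) n
  have hsmul : ∀ x : WithTop ℤ, ((1 : ℤ) : WithTop ℤ) ≤ x →
      ((n : ℤ) : WithTop ℤ) ≤ n • x := by
    intro x hx
    calc ((n : ℤ) : WithTop ℤ) = n • ((1 : ℤ) : WithTop ℤ) := by
          rw [← WithTop.coe_nsmul]; norm_cast; simp
      _ ≤ n • x := nsmul_le_nsmul_right hx n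
  have hφn : φ.coeff n = 1 := by
    have := hmonic.coeff_natDegree
    rwa [hdeg] at this
  have hT : ∀ i k : ℕ,
      w ((Nat.choose k i : L) * algebraMap K L (φ.coeff k) * α ^ ((k : ℤ) - (n : ℤ)))
        = w ((Nat.choose k i : L)) + n • v (φ.coeff k) + (((k : ℤ) - (n : ℤ) : ℤ) : WithTop ℤ) := by
    intro i k
    rw [w.map_mul, w.map_mul, hcompat, hzpow]
  -- bound on the non-leading terms
  have hterm : ∀ i k : ℕ, 1 ≤ k → k < n →
      ((1 : ℤ) : WithTop ℤ) ≤
        w ((Nat.choose k i : L) * algebraMap K L (φ.coeff k) * α ^ ((k : ℤ) - (n : ℤ))) := by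
    intro i k hk1 hkn
    rw [hT i k]
    have h1 : (0 : WithTop ℤ) ≤ w ((Nat.choose k i : L)) := hnatL _
    have h2 : ((n : ℤ) : WithTop ℤ) ≤ n • v (φ.coeff k) :=
      hsmul _ (hEis1 k (by rwa [hdeg]))
    calc ((1 : ℤ) : WithTop ℤ) ≤ ((k : ℤ) : WithTop ℤ) := by exact_mod_cast hk1
      _ = 0 + ((n : ℤ) : WithTop ℤ) + (((k : ℤ) - (n : ℤ) : ℤ) : WithTop ℤ) := by
          rw [zero_add, ← WithTop.coe_add]
          norm_cast
          simp [Int.subNatNat_eq_coe]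
      _ ≤ _ := add_le_add (add_le_add h1 h2) le_rfl
  constructor
  · -- part (a)
    intro i hipm hin
    have hi1 : 1 ≤ i := le_trans (Nat.one_le_pow _ _ hp.pos) hipm
    have hTn : (Nat.choose n i : L) * algebraMap K L (φ.coeff n) * α ^ ((n : ℤ) - (n : ℤ))
        = (Nat.choose n i : L) := by
      rw [hφn, map_one, sub_self, zpow_zero, mul_one, mul_one]
    have hmem : n ∈ Finset.Icc i n := Finset.mem_Icc.mpr ⟨hin, le_refl n⟩
    have hdiffsum : rho φ α n i - (Nat.choose n i : L)
        = ∑ k ∈ (Finset.Icc i n).erase n,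
            (Nat.choose k i : L) * algebraMap K L (φ.coeff k) * α ^ ((k : ℤ) - (n : ℤ)) := by
      rw [rho, ← Finset.add_sum_erase _ _ hmem, hTn]
      ring
    have hdiff : ((1 : ℤ) : WithTop ℤ) ≤ w (rho φ α n i - (Nat.choose n i : L)) := by
      rw [hdiffsum]
      apply w.map_le_sum
      intro k hk
      have hk' := Finset.mem_Icc.mp (Finset.mem_of_mem_erase hk)
      have hkn : k < n := lt_of_le_of_ne hk'.2 (Finset.ne_of_mem_erase hk)
      exact hterm i k (le_trans hi1 hk'.1) hkn
    have h0lt1 : (0 : WithTop ℤ) < ((1 : ℤ) : WithTop ℤ) := by exact_mod_cast zero_lt_one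
    refine ⟨⟨?_, ?_⟩, fun _ => hdiff⟩
    · -- w ρ = 0 → w C = 0
      intro hρ0
      by_contra hC0
      have hCpos : (0 : WithTop ℤ) < w ((Nat.choose n i : L)) :=
        lt_of_le_of_ne (hnatL _) (Ne.symm hC0)
      have hC1 : ((1 : ℤ) : WithTop ℤ) ≤ w ((Nat.choose n i : L)) := by
        cases h : w ((Nat.choose n i : L)) with
        | top => exact le_top
        | coe c =>
            rw [h] at hCpos
            exact_mod_cast hCpos
      have heq : (Nat.choose n i : L) + (rho φ α n i - (Nat.choose n i : L)) = rho φ α n i := by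
        ring
      have := w.map_le_add hC1 hdiff
      rw [heq, hρ0] at this
      exact absurd this (by exact_mod_cast (by norm_num : ¬ ((1:ℤ) ≤ (0:ℤ))))
    · -- w C = 0 → w ρ = 0
      intro hC0
      have heq : (Nat.choose n i : L) + (rho φ α n i - (Nat.choose n i : L)) = rho φ α n i := by
        ring
      have hlt : w ((Nat.choose n i : L)) < w (rho φ α n i - (Nat.choose n i : L)) := by
        rw [hC0]
        exact lt_of_lt_of_le h0lt1 hdiff
      have := w.map_add_eq_of_lt_left hlt
      rw [heq, hC0] at this
      exact this
  · -- part (b)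
    intro s a b hb0 hbn honp
    obtain ⟨hJ, -⟩ := honp
    set i := p ^ s with hi
    have hi1 : 1 ≤ i := Nat.one_le_pow _ _ hp.pos
    simp only [] at hJ
    have hsum : w (∑ k ∈ Finset.Icc i n,
        (Nat.choose k i : L) * algebraMap K L (φ.coeff k) * α ^ ((k : ℤ) - (n : ℤ)))
        = ((a * (n : ℤ) + (b : ℤ) : ℤ) : WithTop ℤ) := by
      rw [← rho]; exact hJ
    -- structure of finite valuations
    have hval : ∀ k ∈ Finset.Icc i n,
        w ((Nat.choose k i : L) * algebraMap K L (φ.coeff k) * α ^ ((k : ℤ) - (n : ℤ))) ≠ ⊤ →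
        ∃ c : ℤ,
          w ((Nat.choose k i : L) * algebraMap K L (φ.coeff k) * α ^ ((k : ℤ) - (n : ℤ)))
            = (c : WithTop ℤ) ∧ (n : ℤ) ∣ (c - ((k : ℤ) - (n : ℤ))) := by
      intro k _ htop
      have hne : (Nat.choose k i : L) * algebraMap K L (φ.coeff k) * α ^ ((k : ℤ) - (n : ℤ)) ≠ 0 :=
        (w.ne_top_iff).mp htop
      have hC : (Nat.choose k i : L) ≠ 0 := fun h => hne (by rw [h]; ring)
      have hφ : φ.coeff k ≠ 0 := fun h => hne (by rw [h]; simp)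
      have hCK : ((Nat.choose k i : ℕ) : K) ≠ 0 := by
        rw [Nat.cast_ne_zero]
        rw [Nat.cast_ne_zero] at hC
        exact hC
      obtain ⟨c₁, hc₁⟩ := WithTop.ne_top_iff_exists.mp ((v.ne_top_iff).mpr hCK)
      obtain ⟨c₂, hc₂⟩ := WithTop.ne_top_iff_exists.mp ((v.ne_top_iff).mpr hφ)
      refine ⟨(n : ℤ) * c₁ + (n : ℤ) * c₂ + ((k : ℤ) - (n : ℤ)), ?_, ?_⟩
      · rw [hT i k, hwC, ← hc₁, ← hc₂, ← WithTop.coe_nsmul, ← WithTop.coe_nsmul]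
        norm_cast
      · refine ⟨c₁ + c₂, by ring⟩
    -- distinct valuations
    have hdist : ∀ k ∈ Finset.Icc i n, ∀ k' ∈ Finset.Icc i n, k ≠ k' →
        w ((Nat.choose k i : L) * algebraMap K L (φ.coeff k) * α ^ ((k : ℤ) - (n : ℤ))) ≠ ⊤ →
        w ((Nat.choose k' i : L) * algebraMap K L (φ.coeff k') * α ^ ((k' : ℤ) - (n : ℤ))) ≠ ⊤ →
        w ((Nat.choose k i : L) * algebraMap K L (φ.coeff k) * α ^ ((k : ℤ) - (n : ℤ)))
          ≠ w ((Nat.choose k' i : L) * algebraMap K L (φ.coeff k') * α ^ ((k' : ℤ) - (n : ℤ))) := by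
      intro k hk k' hk' hne htop htop' heq
      obtain ⟨c, hc, hcd⟩ := hval k hk htop
      obtain ⟨c', hc', hcd'⟩ := hval k' hk' htop'
      rw [hc, hc'] at heq
      have hcc : c = c' := by exact_mod_cast heq
      have hddd : (n : ℤ) ∣ ((k' : ℤ) - (k : ℤ)) := by
        have h3 : ((k' : ℤ) - (k : ℤ)) = (c - ((k : ℤ) - n)) - (c' - ((k' : ℤ) - n)) := by
          rw [hcc]; ring
        rw [h3]
        exact dvd_sub hcd hcd'
      have hk2 := Finset.mem_Icc.mp hk
      have hk'2 := Finset.mem_Icc.mp hk'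
      have habs : |(k' : ℤ) - (k : ℤ)| < (n : ℤ) := by
        rw [abs_lt]
        constructor
        · have h1 : (1 : ℤ) ≤ (k' : ℤ) := by exact_mod_cast le_trans hi1 hk'2.1
          have h2 : (k : ℤ) ≤ (n : ℤ) := by exact_mod_cast hk2.2
          linarith
        · have h1 : (1 : ℤ) ≤ (k : ℤ) := by exact_mod_cast le_trans hi1 hk2.1
          have h2 : (k' : ℤ) ≤ (n : ℤ) := by exact_mod_cast hk'2.2
          linarith
      have := Int.eq_zero_of_abs_lt_dvd hddd habs
      have : (k' : ℤ) = (k : ℤ) := by linarith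
      exact hne (by exact_mod_cast this.symm)
    obtain ⟨k₀, hk₀s, hk₀J, hgt⟩ := key_min w (Finset.Icc i n)
      (fun k => (Nat.choose k i : L) * algebraMap K L (φ.coeff k) * α ^ ((k : ℤ) - (n : ℤ)))
      (a * (n : ℤ) + (b : ℤ)) hsum hdist
    -- identify k₀ = b
    have hk₀top : w ((Nat.choose k₀ i : L) * algebraMap K L (φ.coeff k₀)
        * α ^ ((k₀ : ℤ) - (n : ℤ))) ≠ ⊤ := by
      rw [hk₀J]; exact WithTop.coe_ne_top
    obtain ⟨c, hc, hcd⟩ := hval k₀ hk₀s hk₀top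
    have hcJ : c = a * (n : ℤ) + (b : ℤ) := by
      rw [hk₀J] at hc
      exact_mod_cast hc.symm
    have hk₀2 := Finset.mem_Icc.mp hk₀s
    have hk₀b : k₀ = b := by
      have hdvdb : (n : ℤ) ∣ ((b : ℤ) - (k₀ : ℤ)) := by
        have h3 : ((b : ℤ) - (k₀ : ℤ)) = (c - ((k₀ : ℤ) - n)) - (a + 1) * n := by
          rw [hcJ]; ring
        rw [h3]
        exact dvd_sub hcd ⟨a + 1, mul_comm _ _⟩
      have h1 : (1 : ℤ) ≤ (k₀ : ℤ) := by exact_mod_cast le_trans hi1 hk₀2.1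
      have h2 : (k₀ : ℤ) ≤ (n : ℤ) := by exact_mod_cast hk₀2.2
      have hb1 : (1 : ℤ) ≤ (b : ℤ) := by exact_mod_cast hb0
      have hb2 : (b : ℤ) < (n : ℤ) := by exact_mod_cast hbn
      have habs : |(b : ℤ) - (k₀ : ℤ)| < (n : ℤ) := by
        rw [abs_lt]
        constructor <;> linarith
      have h0 := Int.eq_zero_of_abs_lt_dvd hdvdb habs
      have : (b : ℤ) = (k₀ : ℤ) := by linarith
      exact_mod_cast this.symm
    -- conclude
    subst hk₀b
    have hsplit : rho φ α n i
        - (Nat.choose k₀ i : L) * algebraMap K L (φ.coeff k₀) * α ^ ((k₀ : ℤ) - (n : ℤ))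
        = ∑ k ∈ (Finset.Icc i n).erase k₀,
            (Nat.choose k i : L) * algebraMap K L (φ.coeff k) * α ^ ((k : ℤ) - (n : ℤ)) := by
      rw [rho, ← Finset.add_sum_erase _ _ hk₀s]
      ring
    rw [hJ, hsplit]
    apply w.map_lt_sum WithTop.coe_ne_top
    intro k hk
    exact hgt k (Finset.mem_of_mem_erase hk) (Finset.ne_of_mem_erase hk)
end

section
/- Let φ ∈ O_K[x] be an Eisenstein polynomial of degree n with root α and ramification polynomial ρ. Suppose v_α(ρ_{p^s}) = a·n + b with 0 ≤ b ≤ n−1 for some s ≥ 0. Then v_π(φ_i) ≥ 2 + a − v_π(C(i, p^s)) for p^s ≤ i < b, v_π(φ_i) ≥ 1 + a − v_π(C(i, p^s)) for b ≤ i ≤ n−1, and if b ≠ 0 then v_π(φ_b) = a + 1 − v_π(C(b, p^s)). -/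
open Polynomial

namespace RamificationStmt5

variable {K L : Type*} [Field K] [Field L]

def IsEisenstein (v : AddValuation K (WithTop ℤ)) (φ : Polynomial K) : Prop :=
  φ.Monic ∧ (∀ i < φ.natDegree, ((1 : ℤ) : WithTop ℤ) ≤ v (φ.coeff i)) ∧
    v (φ.coeff 0) = ((1 : ℤ) : WithTop ℤ)

/-- Coefficients of the ramification polynomial `ρ(x) = φ(αx+α)/α^n`. -/
noncomputable def rho [Algebra K L] (φ : Polynomial K) (α : L) (n i : ℕ) : L :=
  ∑ k ∈ Finset.Icc i n, (Nat.choose k i : L) * (algebraMap K L (φ.coeff k)) * α ^ ((k : ℤ) - (n : ℤ))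

end RamificationStmt5

open RamificationStmt5 in
/-- Let `φ ∈ O_K[x]` be Eisenstein of degree `n` with root `α` and ramification
polynomial `ρ`.  Suppose `v_α(ρ_{p^s}) = a·n + b` with `0 ≤ b ≤ n−1`.  Then
`v_π(φ_i) ≥ 2 + a − v_π(C(i,p^s))` for `p^s ≤ i < b`,
`v_π(φ_i) ≥ 1 + a − v_π(C(i,p^s))` for `b ≤ i ≤ n−1`, and if `b ≠ 0` then
`v_π(φ_b) = a + 1 − v_π(C(b,p^s))`.
(The integer values of the binomial valuations are quantified as `c`.) -/
theorem stmt5 {p : ℕ} (hp : p.Prime) {K L : Type*} [Field K] [CharZero K] [Field L] [Algebra K L]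
    (v : AddValuation K (WithTop ℤ)) (π : K) (hπ : v π = ((1 : ℤ) : WithTop ℤ))
    (hresidue_char : 0 < v (p : K))
    (w : AddValuation L (WithTop ℤ))
    (φ : Polynomial K) (n : ℕ) (hn : 0 < n) (hdeg : φ.natDegree = n)
    (hEis : IsEisenstein v φ)
    (α : L) (hroot : Polynomial.aeval α φ = 0) (hα : w α = ((1 : ℤ) : WithTop ℤ))
    (hcompat : ∀ x : K, w (algebraMap K L x) = n • v x)
    (s : ℕ) (a : ℤ) (b : ℕ) (hb : b < n)
    (hpt : w (rho φ α n (p ^ s)) = ((a * n + b : ℤ) : WithTop ℤ)) :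
    (∀ i : ℕ, p ^ s ≤ i → i < b → ∀ c : ℤ, v ((Nat.choose i (p ^ s) : K)) = (c : WithTop ℤ) →
        ((2 + a - c : ℤ) : WithTop ℤ) ≤ v (φ.coeff i)) ∧
    (∀ i : ℕ, b ≤ i → i ≤ n - 1 → ∀ c : ℤ, v ((Nat.choose i (p ^ s) : K)) = (c : WithTop ℤ) →
        ((1 + a - c : ℤ) : WithTop ℤ) ≤ v (φ.coeff i)) ∧
    (b ≠ 0 → ∀ c : ℤ, v ((Nat.choose b (p ^ s) : K)) = (c : WithTop ℤ) →
        v (φ.coeff b) = ((a + 1 - c : ℤ) : WithTop ℤ)) := by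
  classical
  set q := p ^ s with hq
  have hq1 : 1 ≤ q := Nat.one_le_pow _ _ hp.pos
  set f : ℕ → L := fun k =>
    (Nat.choose k q : L) * (algebraMap K L (φ.coeff k)) * α ^ ((k : ℤ) - (n : ℤ)) with hf
  have hrho : rho φ α n q = ∑ k ∈ Finset.Icc q n, f k := rfl
  have hn1 : (1 : ℤ) ≤ (n : ℤ) := by exact_mod_cast hn
  -- valuation of integer powers of α
  have hpow : ∀ j : ℕ, w (α ^ j) = ((j : ℤ) : WithTop ℤ) := by
    intro j
    rw [AddValuation.map_pow, hα, ← WithTop.coe_nsmul]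
    congr 1
    simp
  have hzpow : ∀ m : ℤ, w (α ^ m) = (m : WithTop ℤ) := by
    intro m
    rcases m with j | j
    · rw [Int.ofNat_eq_coe, zpow_natCast]; exact hpow j
    · rw [zpow_negSucc, AddValuation.map_inv, hpow (j + 1),
        ← WithTop.LinearOrderedAddCommGroup.coe_neg]
      congr 1
  -- rewriting of terms
  have hfalg : ∀ k : ℕ,
      f k = algebraMap K L ((Nat.choose k q : K) * φ.coeff k) * α ^ ((k : ℤ) - (n : ℤ)) := by
    intro k
    rw [hf]; dsimp only
    rw [map_mul, map_natCast]
  have htermc : ∀ k : ℕ, ∀ d : ℤ, v ((Nat.choose k q : K) * φ.coeff k) = (d : WithTop ℤ) →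
      w (f k) = (((n : ℤ) * d + k - n : ℤ) : WithTop ℤ) := by
    intro k d hd
    rw [hfalg k, AddValuation.map_mul, hcompat, hzpow, hd, ← WithTop.coe_nsmul,
      ← WithTop.coe_add]
    congr 1
    push_cast
    ring
  have hf0 : ∀ k : ℕ, v ((Nat.choose k q : K) * φ.coeff k) = ⊤ → f k = 0 := by
    intro k hk
    have h0 : ((Nat.choose k q : K) * φ.coeff k) = 0 := (AddValuation.top_iff v).mp hk
    rw [hfalg k, h0, map_zero, zero_mul]
  have hgne : ∀ k : ℕ, w (f k) ≠ ⊤ → v ((Nat.choose k q : K) * φ.coeff k) ≠ ⊤ := by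
    intro k hk ht
    exact hk (by rw [hf0 k ht, AddValuation.map_zero])
  -- q ≤ n
  have hqn : q ≤ n := by
    by_contra h
    push_neg at h
    rw [hrho, Finset.Icc_eq_empty (by omega), Finset.sum_empty, AddValuation.map_zero] at hpt
    exact (WithTop.coe_ne_top hpt.symm)
  obtain ⟨k₀, hk₀S, hk₀min⟩ := Finset.exists_min_image (Finset.Icc q n) (fun k => w (f k))
    ⟨n, Finset.mem_Icc.mpr ⟨hqn, le_rfl⟩⟩
  have hk₀top : w (f k₀) ≠ ⊤ := by
    intro h
    have hz : ∀ k ∈ Finset.Icc q n, f k = 0 := by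
      intro k hk
      have h2 : w (f k) = ⊤ := top_le_iff.mp (h ▸ hk₀min k hk)
      exact (AddValuation.top_iff w).mp h2
    rw [hrho, Finset.sum_eq_zero hz, AddValuation.map_zero] at hpt
    exact (WithTop.coe_ne_top hpt.symm)
  -- strictness of the minimum
  have hstrict : ∀ k ∈ Finset.Icc q n, k ≠ k₀ → w (f k₀) < w (f k) := by
    intro k hk hne'
    rcases lt_or_eq_of_le (hk₀min k hk) with h | h
    · exact h
    · exfalso
      have hkt : w (f k) ≠ ⊤ := by rw [← h]; exact hk₀top
      obtain ⟨d, hd⟩ := WithTop.ne_top_iff_exists.mp (hgne k hkt)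
      obtain ⟨d₀, hd₀⟩ := WithTop.ne_top_iff_exists.mp (hgne k₀ hk₀top)
      have e1 := htermc k d hd.symm
      have e2 := htermc k₀ d₀ hd₀.symm
      rw [e1, e2] at h
      have hZ : (n : ℤ) * d₀ + k₀ - n = (n : ℤ) * d + k - n := by exact_mod_cast h
      have hdvd : (n : ℤ) ∣ ((k : ℤ) - k₀) := ⟨d₀ - d, by linarith⟩
      obtain ⟨hk1, hk2⟩ := Finset.mem_Icc.mp hk
      obtain ⟨hk₀1, hk₀2⟩ := Finset.mem_Icc.mp hk₀S
      have hbnd : |(k : ℤ) - k₀| < n := by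
        rw [abs_lt]
        constructor <;> [push_cast; push_cast] <;> omega
      have := Int.eq_zero_of_abs_lt_dvd hdvd hbnd
      apply hne'
      omega
  -- valuation of rho equals the minimal term
  have hwrho : w (rho φ α n q) = w (f k₀) := by
    rw [hrho, ← Finset.add_sum_erase _ f hk₀S]
    refine AddValuation.map_add_eq_of_lt_left w ?_
    refine AddValuation.map_lt_sum w hk₀top ?_
    intro k hk
    exact hstrict k (Finset.mem_of_mem_erase hk) (Finset.ne_of_mem_erase hk)
  have hval : w (f k₀) = ((a * n + b : ℤ) : WithTop ℤ) := by rw [← hwrho, hpt]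
  have hmin : ∀ k ∈ Finset.Icc q n, ((a * n + b : ℤ) : WithTop ℤ) ≤ w (f k) :=
    fun k hk => hval ▸ hk₀min k hk
  -- main inequality in ℤ for each relevant term
  have hbound : ∀ i ∈ Finset.Icc q n, ∀ c d : ℤ, v ((Nat.choose i q : K)) = (c : WithTop ℤ) →
      v (φ.coeff i) = (d : WithTop ℤ) → a * n + b ≤ (n : ℤ) * (c + d) + i - n := by
    intro i hi c d hc hd
    have hg : v ((Nat.choose i q : K) * φ.coeff i) = ((c + d : ℤ) : WithTop ℤ) := by
      rw [AddValuation.map_mul, hc, hd, ← WithTop.coe_add]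
    have h1 := hmin i hi
    rw [htermc i (c + d) hg] at h1
    exact_mod_cast h1
  refine ⟨?_, ?_, ?_⟩
  · -- first bullet
    intro i hqi hib c hc
    by_cases hd : v (φ.coeff i) = ⊤
    · rw [hd]; exact le_top
    obtain ⟨d, hd'⟩ := WithTop.ne_top_iff_exists.mp hd
    rw [← hd', WithTop.coe_le_coe]
    have h1 := hbound i (Finset.mem_Icc.mpr ⟨hqi, by omega⟩) c d hc hd'.symm
    have hib' : (i : ℤ) + 1 ≤ b := by exact_mod_cast hib
    by_contra hcon
    push_neg at hcon
    have h2 : (n : ℤ) * (c + d) ≤ (n : ℤ) * (a + 1) :=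
      mul_le_mul_of_nonneg_left (by linarith) (by linarith)
    linarith
  · -- second bullet
    intro i hbi hin1 c hc
    have hiq : q ≤ i := by
      by_contra h
      push_neg at h
      rw [Nat.choose_eq_zero_of_lt h] at hc
      simp at hc
    by_cases hd : v (φ.coeff i) = ⊤
    · rw [hd]; exact le_top
    obtain ⟨d, hd'⟩ := WithTop.ne_top_iff_exists.mp hd
    rw [← hd', WithTop.coe_le_coe]
    have h1 := hbound i (Finset.mem_Icc.mpr ⟨hiq, by omega⟩) c d hc hd'.symm
    have hin' : (i : ℤ) + 1 ≤ (n : ℤ) := by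
      have h3 : i + 1 ≤ n := by omega
      exact_mod_cast h3
    have hb0 : (0 : ℤ) ≤ b := by positivity
    by_contra hcon
    push_neg at hcon
    have h2 : (n : ℤ) * (c + d) ≤ (n : ℤ) * a :=
      mul_le_mul_of_nonneg_left (by linarith) (by linarith)
    linarith
  · -- third bullet
    intro hb0 c hc
    obtain ⟨e, he⟩ := WithTop.ne_top_iff_exists.mp (hgne k₀ hk₀top)
    have e2 := htermc k₀ e he.symm
    rw [hval] at e2
    have hZ : a * n + b = (n : ℤ) * e + k₀ - n := by exact_mod_cast e2
    obtain ⟨hk₀1, hk₀2⟩ := Finset.mem_Icc.mp hk₀S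
    -- k₀ = b
    have hdvd : (n : ℤ) ∣ ((k₀ : ℤ) - b) := ⟨a + 1 - e, by linarith⟩
    have hbnd : |(k₀ : ℤ) - b| < n := by
      rw [abs_lt]
      constructor <;> push_cast <;> omega
    have hk₀b : k₀ = b := by
      have := Int.eq_zero_of_abs_lt_dvd hdvd hbnd
      omega
    subst hk₀b
    -- e = a + 1
    have hea : e = a + 1 := by
      have : (n : ℤ) * e = (n : ℤ) * (a + 1) := by linarith
      exact mul_left_cancel₀ (by linarith) this
    -- extract v(φ_b)
    have hmul : ((e : ℤ) : WithTop ℤ) = (c : WithTop ℤ) + v (φ.coeff k₀) := by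
      rw [he, AddValuation.map_mul, hc]
    by_cases hd : v (φ.coeff k₀) = ⊤
    · rw [hd] at hmul; simp at hmul
    obtain ⟨d, hd'⟩ := WithTop.ne_top_iff_exists.mp hd
    rw [← hd'] at hmul ⊢
    rw [← WithTop.coe_add] at hmul
    have : e = c + d := by exact_mod_cast hmul
    congr 1
    omega
end

section
/- Let φ ∈ O_K[x] be an Eisenstein polynomial of degree n with root α and ramification polynomial ρ. If v_α(ρ_{p^s}) = J with J = a·n + b, 0 ≤ b ≤ n−1, then min{ v_π(C(b, p^s))·n, v_π(C(n, p^s))·n } ≤ J ≤ v_π(C(n, p^s))·n (with the convention v_π(C(0,p^s)) = v_π(0) = ∞ when b = 0). -/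
open Polynomial

namespace RamificationStmt6

variable {K L : Type*} [Field K] [Field L]

def IsEisenstein (v : AddValuation K (WithTop ℤ)) (φ : Polynomial K) : Prop :=
  φ.Monic ∧ (∀ i < φ.natDegree, ((1 : ℤ) : WithTop ℤ) ≤ v (φ.coeff i)) ∧
    v (φ.coeff 0) = ((1 : ℤ) : WithTop ℤ)

/-- Coefficients of the ramification polynomial `ρ(x) = φ(αx+α)/α^n`. -/
noncomputable def rho [Algebra K L] (φ : Polynomial K) (α : L) (n i : ℕ) : L :=
  ∑ k ∈ Finset.Icc i n, (Nat.choose k i : L) * (algebraMap K L (φ.coeff k)) * α ^ ((k : ℤ) - (n : ℤ))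

end RamificationStmt6

namespace Stmt6Aux

lemma nsmul_coe (n : ℕ) (t : ℤ) : n • ((t : WithTop ℤ)) = (((n : ℤ) * t : ℤ) : WithTop ℤ) := by
  induction n with
  | zero => simp
  | succ k ih => rw [succ_nsmul, ih, ← WithTop.coe_add]; congr 1; push_cast; ring

lemma nsmul_top (n : ℕ) (hn : 0 < n) : n • (⊤ : WithTop ℤ) = ⊤ := by
  obtain ⟨m, rfl⟩ := Nat.exists_eq_succ_of_ne_zero hn.ne'
  rw [succ_nsmul]; simp

lemma vnat_nonneg {K : Type*} [Field K] (v : AddValuation K (WithTop ℤ)) (N : ℕ) :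
    0 ≤ v (N : K) := by
  induction N with
  | zero => simp
  | succ k ih => push_cast; exact v.map_le_add ih (by simp)

end Stmt6Aux

set_option linter.unusedVariables false in
open RamificationStmt6 in
/-- **generalized Ore conditions.** Let `φ ∈ O_K[x]` be Eisenstein of degree `n`
with root `α` and ramification polynomial `ρ`.  If `v_α(ρ_{p^s}) = J` with `J = a·n + b`,
`0 ≤ b ≤ n−1`, then `min{v_π(C(b,p^s))·n, v_π(C(n,p^s))·n} ≤ J ≤ v_π(C(n,p^s))·n`, with the
convention `v_π(0) = ∞` (valuations take values in `WithTop ℤ`, so `C(0,p^s) = 0` has valuation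
`⊤`). -/
theorem stmt6 {p : ℕ} (hp : p.Prime) {K L : Type*} [Field K] [CharZero K] [Field L] [Algebra K L]
    (v : AddValuation K (WithTop ℤ)) (π : K) (hπ : v π = ((1 : ℤ) : WithTop ℤ))
    (hresidue_char : 0 < v (p : K))
    (w : AddValuation L (WithTop ℤ))
    (φ : Polynomial K) (n : ℕ) (hn : 0 < n) (hdeg : φ.natDegree = n)
    (hEis : IsEisenstein v φ)
    (α : L) (hroot : Polynomial.aeval α φ = 0) (hα : w α = ((1 : ℤ) : WithTop ℤ))
    (hcompat : ∀ x : K, w (algebraMap K L x) = n • v x)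
    (s : ℕ) (a : ℤ) (b : ℕ) (hb : b < n)
    (hpt : w (rho φ α n (p ^ s)) = ((a * n + b : ℤ) : WithTop ℤ)) :
    min (n • v ((Nat.choose b (p ^ s) : K))) (n • v ((Nat.choose n (p ^ s) : K)))
        ≤ ((a * n + b : ℤ) : WithTop ℤ) ∧
      ((a * n + b : ℤ) : WithTop ℤ) ≤ n • v ((Nat.choose n (p ^ s) : K)) := by
  classical
  set m := p ^ s with hmdef
  have hm1 : 1 ≤ m := Nat.one_le_pow _ _ hp.pos
  set J : ℤ := a * n + b with hJdef
  by_cases hmn : m ≤ n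
  swap
  · exfalso
    have hempty : Finset.Icc m n = ∅ := Finset.Icc_eq_empty (by omega)
    rw [rho, hempty, Finset.sum_empty] at hpt
    simp at hpt
  have hα0 : α ≠ 0 := by
    intro h
    rw [h, AddValuation.map_zero] at hα
    exact WithTop.coe_ne_top hα.symm
  set c : ℕ → K := fun k => (Nat.choose k m : K) * φ.coeff k with hc
  set f : ℕ → L := fun k => algebraMap K L (c k) * α ^ k with hf
  -- ρ_{p^s} · α^n = ∑ f k
  have hS : rho φ α n m * α ^ n = ∑ k ∈ Finset.Icc m n, f k := by
    rw [rho, Finset.sum_mul]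
    refine Finset.sum_congr rfl fun k hk => ?_
    have key : α ^ ((k : ℤ) - (n : ℤ)) * α ^ n = α ^ k := by
      rw [← zpow_natCast α n, ← zpow_natCast α k, ← zpow_add₀ hα0]
      congr 1; ring
    simp only [hf, hc, map_mul, map_natCast]
    rw [mul_assoc ((Nat.choose k m : L) * algebraMap K L (φ.coeff k)), key, mul_assoc]
  have hwα : ∀ k : ℕ, w (α ^ k) = ((k : ℤ) : WithTop ℤ) := by
    intro k
    rw [AddValuation.map_pow, hα, Stmt6Aux.nsmul_coe]
    simp
  have hwf : ∀ k : ℕ, w (f k) = n • v (c k) + ((k : ℤ) : WithTop ℤ) := by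
    intro k
    rw [hf]
    simp only
    rw [AddValuation.map_mul, hcompat, hwα]
  have hwS : w (∑ k ∈ Finset.Icc m n, f k) = ((J + n : ℤ) : WithTop ℤ) := by
    rw [← hS, AddValuation.map_mul, hpt, hwα, ← WithTop.coe_add]
  obtain ⟨k0, hk0mem, hk0min⟩ := Finset.exists_min_image (Finset.Icc m n)
    (fun k => w (f k)) ⟨n, Finset.mem_Icc.mpr ⟨hmn, le_rfl⟩⟩
  obtain ⟨hk0m, hk0n⟩ := Finset.mem_Icc.mp hk0mem
  have hMle : w (f k0) ≤ ((J + n : ℤ) : WithTop ℤ) := by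
    rw [← hwS]; exact w.map_le_sum hk0min
  have hMne : w (f k0) ≠ ⊤ := ne_top_of_le_ne_top WithTop.coe_ne_top hMle
  -- decomposition of finite terms
  have decomp : ∀ k : ℕ, w (f k) ≠ ⊤ →
      ∃ t : ℤ, v (c k) = (t : WithTop ℤ) ∧ w (f k) = (((n : ℤ) * t + k : ℤ) : WithTop ℤ) := by
    intro k hne
    rw [hwf] at hne ⊢
    have hvne : v (c k) ≠ ⊤ := by
      intro h
      rw [h, Stmt6Aux.nsmul_top n hn, top_add] at hne
      exact hne rfl
    obtain ⟨t, ht⟩ := WithTop.ne_top_iff_exists.mp hvne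
    refine ⟨t, ht.symm, ?_⟩
    rw [← ht, Stmt6Aux.nsmul_coe, ← WithTop.coe_add]
  -- strictness of the minimum
  have hstrict : ∀ k ∈ Finset.Icc m n, k ≠ k0 → w (f k0) < w (f k) := by
    intro k hk hne
    rcases eq_or_ne (w (f k)) ⊤ with h | h
    · rw [h]
      exact lt_of_le_of_ne le_top hMne
    · refine lt_of_le_of_ne (hk0min k hk) fun heq => ?_
      obtain ⟨hkm, hkn⟩ := Finset.mem_Icc.mp hk
      obtain ⟨t1, _, h1⟩ := decomp k h
      obtain ⟨t0, _, h0⟩ := decomp k0 hMne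
      rw [h0, h1] at heq
      have hEq : (n : ℤ) * t0 + k0 = (n : ℤ) * t1 + k := WithTop.coe_inj.mp heq
      have hd : (k : ℤ) - k0 = (n : ℤ) * (t0 - t1) := by linarith [mul_sub (n : ℤ) t0 t1]
      rcases lt_trichotomy (t0 - t1) 0 with hlt | heq0 | hgt
      · have h6 : (k : ℤ) - k0 ≤ -(n : ℤ) := by
          rw [hd]; nlinarith
        omega
      · have h6 : (k : ℤ) - k0 = 0 := by rw [hd, heq0, mul_zero]
        exact hne (by omega)
      · have h6 : (n : ℤ) ≤ (k : ℤ) - k0 := by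
          rw [hd]; nlinarith
        omega
  -- value of the sum = value of minimal term
  have hwSM : w (f k0) = ((J + n : ℤ) : WithTop ℤ) := by
    have hrest : w (f k0) < w (∑ k ∈ (Finset.Icc m n).erase k0, f k) := by
      refine w.map_lt_sum' (lt_top_iff_ne_top.mpr hMne) fun i hi => ?_
      exact hstrict i (Finset.mem_of_mem_erase hi) (Finset.ne_of_mem_erase hi)
    have h2 := w.map_add_eq_of_lt_left hrest
    rw [Finset.add_sum_erase _ f hk0mem] at h2
    exact h2.symm.trans hwS
  -- upper bound
  have hcoeffn : φ.coeff n = 1 := by rw [← hdeg]; exact hEis.1.coeff_natDegree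
  have hcn : c n = (Nat.choose n m : K) := by rw [hc]; simp [hcoeffn]
  have hub : ((J + n : ℤ) : WithTop ℤ) ≤ n • v ((Nat.choose n m : K)) + ((n : ℤ) : WithTop ℤ) := by
    rw [← hwSM]
    have h3 := hk0min n (Finset.mem_Icc.mpr ⟨hmn, le_rfl⟩)
    rwa [hwf n, hcn] at h3
  have hupper : ((J : ℤ) : WithTop ℤ) ≤ n • v ((Nat.choose n m : K)) := by
    refine (WithTop.add_le_add_iff_right (WithTop.coe_ne_top (a := (n : ℤ)))).mp ?_
    rw [← WithTop.coe_add]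
    exact hub
  refine ⟨?_, hupper⟩
  -- lower bound
  rcases eq_or_ne k0 n with hk0eq | hk0ne
  · -- minimal term is the leading one
    subst hk0eq
    have h4 : k0 • v ((Nat.choose k0 m : K)) + ((k0 : ℤ) : WithTop ℤ) = ((J + k0 : ℤ) : WithTop ℤ) := by
      rw [← hcn, ← hwf k0, hwSM]
    have h5 : k0 • v ((Nat.choose k0 m : K)) = ((J : ℤ) : WithTop ℤ) := by
      refine WithTop.add_right_cancel (WithTop.coe_ne_top (a := (k0 : ℤ))) ?_
      rw [h4, ← WithTop.coe_add]
    exact le_trans (min_le_right _ _) (le_of_eq h5)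
  · have hk0lt : k0 < n := lt_of_le_of_ne hk0n hk0ne
    obtain ⟨t, htc, hft⟩ := decomp k0 hMne
    have hE1 : (n : ℤ) * t + k0 = J + n := WithTop.coe_inj.mp (hft.symm.trans hwSM)
    -- split v (c k0)
    have hsplit : v (c k0) = v ((Nat.choose k0 m : K)) + v (φ.coeff k0) := by
      rw [hc]; exact v.map_mul _ _
    have hC_ne : v ((Nat.choose k0 m : K)) ≠ ⊤ := by
      intro h
      rw [hsplit, h, top_add] at htc
      exact WithTop.coe_ne_top htc.symm
    have hφ_ne : v (φ.coeff k0) ≠ ⊤ := by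
      intro h
      rw [hsplit, h, add_top] at htc
      exact WithTop.coe_ne_top htc.symm
    obtain ⟨t1, ht1⟩ := WithTop.ne_top_iff_exists.mp hC_ne
    obtain ⟨t2, ht2⟩ := WithTop.ne_top_iff_exists.mp hφ_ne
    have ht12 : t1 + t2 = t := by
      have : ((t1 + t2 : ℤ) : WithTop ℤ) = (t : WithTop ℤ) := by
        rw [WithTop.coe_add, ht1, ht2, ← hsplit, htc]
      exact WithTop.coe_inj.mp this
    have ht1nn : 0 ≤ t1 := by
      have := Stmt6Aux.vnat_nonneg v (Nat.choose k0 m)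
      rw [← ht1] at this
      exact_mod_cast this
    have ht2ge : 1 ≤ t2 := by
      have := hEis.2.1 k0 (by omega)
      rw [← ht2] at this
      exact_mod_cast this
    -- b = k0
    have hE1' : (n : ℤ) * t + k0 = a * n + b + n := hE1
    have hbk0 : b = k0 := by
      have hd : (b : ℤ) - k0 = (n : ℤ) * (t - a - 1) := by linear_combination -hE1'
      rcases lt_trichotomy (t - a - 1) 0 with hlt | heq0 | hgt
      · have h6 : (b : ℤ) - k0 ≤ -(n : ℤ) := by rw [hd]; nlinarith
        omega
      · have h6 : (b : ℤ) - k0 = 0 := by rw [hd, heq0, mul_zero]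
        omega
      · have h6 : (n : ℤ) ≤ (b : ℤ) - k0 := by rw [hd]; nlinarith
        omega
    have hvb : n • v ((Nat.choose b m : K)) = (((n : ℤ) * t1 : ℤ) : WithTop ℤ) := by
      rw [hbk0, ← ht1, Stmt6Aux.nsmul_coe]
    have h7 : (n : ℤ) ≤ (n : ℤ) * t2 := le_mul_of_one_le_right (by positivity) ht2ge
    have h8 : (n : ℤ) * t = (n : ℤ) * t1 + (n : ℤ) * t2 := by rw [← ht12, mul_add]
    have hk00 : (0 : ℤ) ≤ (k0 : ℤ) := Int.ofNat_nonneg k0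
    have hle : (n : ℤ) * t1 ≤ a * n + b := by linarith
    refine le_trans (min_le_left _ _) ?_
    rw [hvb]
    exact WithTop.coe_le_coe.mpr hle
end

section
/- Let φ ∈ O_K[x] be an Eisenstein polynomial of degree n with root α and ramification polynomial ρ. Suppose (p^{s_t}, J_t) and (p^{s_{t+1}}, J_{t+1}) are points on the ramification polygon of φ and that for some i with s_t < i < s_{t+1} the point (p^i, v_α(ρ_{p^i})) lies strictly above the segment joining them, i.e. v_α(ρ_{p^i}) > ((J_{t+1} − J_t)/(p^{s_{t+1}} − p^{s_t}))·(p^i − p^{s_t}) + J_t. Then for every k with p^i ≤ k ≤ n, v_π(φ_k) > (1/n)·[ ((J_{t+1} − J_t)/(p^{s_{t+1}} − p^{s_t}))·(p^i − p^{s_t}) + J_t − k ] + 1 − v_π(C(k, p^i)). -/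
open Polynomial

namespace RamificationStmt7

variable {K L : Type*} [Field K] [Field L]

def IsEisenstein (v : AddValuation K (WithTop ℤ)) (φ : Polynomial K) : Prop :=
  φ.Monic ∧ (∀ i < φ.natDegree, ((1 : ℤ) : WithTop ℤ) ≤ v (φ.coeff i)) ∧
    v (φ.coeff 0) = ((1 : ℤ) : WithTop ℤ)

/-- Coefficients of the ramification polynomial `ρ(x) = φ(αx+α)/α^n`. -/
noncomputable def rho [Algebra K L] (φ : Polynomial K) (α : L) (n i : ℕ) : L :=
  ∑ k ∈ Finset.Icc i n, (Nat.choose k i : L) * (algebraMap K L (φ.coeff k)) * α ^ ((k : ℤ) - (n : ℤ))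

/-- `(x0, J)` is a point on the ramification polygon (on the lower convex hull of the points
`(i, v_α(ρ_i))`, `1 ≤ i ≤ n`). -/
def OnRamPolygon (w : AddValuation L (WithTop ℤ)) (ρ : ℕ → L) (n x0 : ℕ) (J : ℤ) : Prop :=
  w (ρ x0) = (J : WithTop ℤ) ∧
    ∃ lam : ℚ, ∀ i : ℕ, 1 ≤ i → i ≤ n → ∀ c : ℤ, w (ρ i) = (c : WithTop ℤ) →
      (J : ℚ) + lam * ((i : ℚ) - (x0 : ℚ)) ≤ (c : ℚ)

end RamificationStmt7

/-- Ultrametric: if the values `w (f j)` are pairwise distinct where finite, then the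
valuation of the sum is at most the valuation of any term with finite valuation. -/
lemma val_sum_le_of_distinct {L : Type*} [Field L] (w : AddValuation L (WithTop ℤ))
    {ι : Type*} {S : Finset ι} {f : ι → L}
    (hdist : ∀ j ∈ S, ∀ j' ∈ S, j ≠ j' → w (f j) = w (f j') → w (f j) = ⊤)
    {k : ι} (hk : k ∈ S) (hfk : w (f k) ≠ ⊤) :
    w (∑ j ∈ S, f j) ≤ w (f k) := by
  classical
  set S' := S.filter (fun j => w (f j) ≠ ⊤) with hS'
  have hk' : k ∈ S' := Finset.mem_filter.2 ⟨hk, hfk⟩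
  obtain ⟨j0, hj0S', hj0min⟩ := S'.exists_min_image (fun j => w (f j)) ⟨k, hk'⟩
  have hj0S : j0 ∈ S := (Finset.mem_filter.1 hj0S').1
  have hj0fin : w (f j0) ≠ ⊤ := (Finset.mem_filter.1 hj0S').2
  have hlt : ∀ j ∈ S, j ≠ j0 → w (f j0) < w (f j) := by
    intro j hj hne
    by_cases hfin : w (f j) = ⊤
    · rw [hfin]; exact lt_top_iff_ne_top.2 hj0fin
    · have hle := hj0min j (Finset.mem_filter.2 ⟨hj, hfin⟩)
      refine lt_of_le_of_ne hle fun heq => hfin (hdist j hj j0 hj0S hne heq.symm)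
  have hsum_eq : w (∑ j ∈ S, f j) = w (f j0) := by
    rw [← Finset.add_sum_erase S f hj0S]
    refine AddValuation.map_add_eq_of_lt_left w ?_
    exact AddValuation.map_lt_sum' w (lt_top_iff_ne_top.2 hj0fin)
      (fun j hj => hlt j (Finset.mem_of_mem_erase hj) (Finset.ne_of_mem_erase hj))
  rw [hsum_eq]
  exact hj0min k hk'

open RamificationStmt7 in
/-- Let `φ ∈ O_K[x]` be Eisenstein of degree `n` with root `α` and ramification
polynomial `ρ`.  Suppose `(p^{s_t}, J_t)` and `(p^{s_{t+1}}, J_{t+1})` are points on the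
ramification polygon of `φ` and for some `i` with `s_t < i < s_{t+1}` the point
`(p^i, v_α(ρ_{p^i}))` lies strictly above the segment joining them.  Then for every `k` with
`p^i ≤ k ≤ n`,
`v_π(φ_k) > (1/n)·[((J_{t+1}−J_t)/(p^{s_{t+1}}−p^{s_t}))·(p^i−p^{s_t}) + J_t − k] + 1 − v_π(C(k,p^i))`.
(Valuation values are quantified over their integer values `c`, so that infinite valuations
satisfy the bound trivially.) -/
theorem stmt7 {p : ℕ} (hp : p.Prime) {K L : Type*} [Field K] [CharZero K] [Field L] [Algebra K L]
    (v : AddValuation K (WithTop ℤ)) (π : K) (hπ : v π = ((1 : ℤ) : WithTop ℤ))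
    (hresidue_char : 0 < v (p : K))
    (w : AddValuation L (WithTop ℤ))
    (φ : Polynomial K) (n : ℕ) (hn : 0 < n) (hdeg : φ.natDegree = n)
    (hEis : IsEisenstein v φ)
    (α : L) (hroot : Polynomial.aeval α φ = 0) (hα : w α = ((1 : ℤ) : WithTop ℤ))
    (hcompat : ∀ x : K, w (algebraMap K L x) = n • v x)
    (st st1 : ℕ) (Jt Jt1 : ℤ) (i : ℕ) (h1 : st < i) (h2 : i < st1)
    (hpt : OnRamPolygon w (fun j => rho φ α n j) n (p ^ st) Jt)
    (hpt1 : OnRamPolygon w (fun j => rho φ α n j) n (p ^ st1) Jt1)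
    (habove : ∀ c : ℤ, w (rho φ α n (p ^ i)) = (c : WithTop ℤ) →
      (Jt : ℚ) + ((Jt1 : ℚ) - (Jt : ℚ)) / ((p : ℚ) ^ st1 - (p : ℚ) ^ st) *
          ((p : ℚ) ^ i - (p : ℚ) ^ st) < (c : ℚ)) :
    ∀ k : ℕ, p ^ i ≤ k → k ≤ n → ∀ c cb : ℤ,
      v (φ.coeff k) = (c : WithTop ℤ) →
      v ((Nat.choose k (p ^ i) : K)) = (cb : WithTop ℤ) →
      (1 / (n : ℚ)) *
          (((Jt1 : ℚ) - (Jt : ℚ)) / ((p : ℚ) ^ st1 - (p : ℚ) ^ st) *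
              ((p : ℚ) ^ i - (p : ℚ) ^ st) + (Jt : ℚ) - (k : ℚ)) + 1 - (cb : ℚ)
        < (c : ℚ) := by
  classical
  intro k hk1 hk2 c cb hc hcb
  have hα0 : α ≠ 0 := by
    intro h
    rw [h, AddValuation.map_zero] at hα
    exact (WithTop.coe_ne_top (a := (1:ℤ))) hα.symm
  have hpi1 : 1 ≤ p ^ i := Nat.one_le_pow _ _ hp.pos
  set f : ℕ → L := fun j => (Nat.choose j (p ^ i) : L) * algebraMap K L (φ.coeff j) * α ^ j
    with hf
  have hsum : rho φ α n (p ^ i) * α ^ n = ∑ j ∈ Finset.Icc (p ^ i) n, f j := by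
    rw [rho, Finset.sum_mul]
    refine Finset.sum_congr rfl fun j hj => ?_
    rw [hf]
    show (_ : L) * _ * _ * _ = _ * _ * _
    rw [mul_assoc ((Nat.choose j (p ^ i) : L) * algebraMap K L (φ.coeff j))]
    congr 1
    rw [← zpow_natCast α n, ← zpow_add₀ hα0, sub_add_cancel, zpow_natCast]
  -- valuation of the terms
  have hcast : ∀ j : ℕ, ((Nat.choose j (p ^ i) : L)) = algebraMap K L ((Nat.choose j (p ^ i) : K)) := by
    intro j; rw [map_natCast]
  have hfval : ∀ (j : ℕ) (a b : ℤ), v ((Nat.choose j (p ^ i) : K)) = (a : WithTop ℤ) →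
      v (φ.coeff j) = (b : WithTop ℤ) →
      w (f j) = (((n : ℤ) * a + (n : ℤ) * b + (j : ℤ) : ℤ) : WithTop ℤ) := by
    intro j a b ha hb
    rw [hf]
    show w (_ * _ * _) = _
    rw [AddValuation.map_mul, AddValuation.map_mul, AddValuation.map_pow, hcast, hcompat,
      hcompat, hα, ha, hb, ← WithTop.coe_nsmul, ← WithTop.coe_nsmul, ← WithTop.coe_nsmul,
      ← WithTop.coe_add, ← WithTop.coe_add, WithTop.coe_inj, nsmul_eq_mul, nsmul_eq_mul,
      nsmul_eq_mul]
    ring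
  have hftop : ∀ j : ℕ, ((Nat.choose j (p ^ i) : K)) = 0 ∨ φ.coeff j = 0 → w (f j) = ⊤ := by
    intro j hj
    have : f j = 0 := by
      rcases hj with hj | hj
      · rw [hf]; show (_ : L) * _ * _ = 0
        rw [hcast, hj, map_zero, zero_mul, zero_mul]
      · rw [hf]; show (_ : L) * _ * _ = 0
        rw [hj, map_zero, mul_zero, zero_mul]
    rw [this, AddValuation.map_zero]
  -- distinctness of finite values
  have hdist : ∀ j ∈ Finset.Icc (p ^ i) n, ∀ j' ∈ Finset.Icc (p ^ i) n, j ≠ j' →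
      w (f j) = w (f j') → w (f j) = ⊤ := by
    intro j hj j' hj' hne heq
    by_contra htop
    have htop' : w (f j') ≠ ⊤ := heq ▸ htop
    have hCj : ((Nat.choose j (p ^ i) : K)) ≠ 0 := fun h => htop (hftop j (Or.inl h))
    have hφj : φ.coeff j ≠ 0 := fun h => htop (hftop j (Or.inr h))
    have hCj' : ((Nat.choose j' (p ^ i) : K)) ≠ 0 := fun h => htop' (hftop j' (Or.inl h))
    have hφj' : φ.coeff j' ≠ 0 := fun h => htop' (hftop j' (Or.inr h))
    obtain ⟨a, ha⟩ := WithTop.ne_top_iff_exists.1 (v.ne_top_iff.2 hCj)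
    obtain ⟨b, hb⟩ := WithTop.ne_top_iff_exists.1 (v.ne_top_iff.2 hφj)
    obtain ⟨a', ha'⟩ := WithTop.ne_top_iff_exists.1 (v.ne_top_iff.2 hCj')
    obtain ⟨b', hb'⟩ := WithTop.ne_top_iff_exists.1 (v.ne_top_iff.2 hφj')
    rw [hfval j a b ha.symm hb.symm, hfval j' a' b' ha'.symm hb'.symm] at heq
    have heqz : (n : ℤ) * a + n * b + j = (n : ℤ) * a' + n * b' + j' :=
      WithTop.coe_inj.1 heq
    have hj1 := Finset.mem_Icc.1 hj
    have hj'1 := Finset.mem_Icc.1 hj'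
    have hjz : (j : ℤ) - j' = (n : ℤ) * ((a' + b') - (a + b)) := by ring_nf; linarith [heqz]
    have hzero : (j : ℤ) - j' = 0 := by
      refine Int.eq_zero_of_abs_lt_dvd ⟨_, hjz⟩ ?_
      have h1j : 1 ≤ j := le_trans hpi1 hj1.1
      have h1j' : 1 ≤ j' := le_trans hpi1 hj'1.1
      have : (j : ℤ) ≤ n := by exact_mod_cast hj1.2
      have : (j' : ℤ) ≤ n := by exact_mod_cast hj'1.2
      have h1jz : (1 : ℤ) ≤ j := by exact_mod_cast h1j
      have h1j'z : (1 : ℤ) ≤ j' := by exact_mod_cast h1j'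
      rw [abs_sub_lt_iff]
      constructor <;> linarith
    exact hne (by exact_mod_cast sub_eq_zero.1 hzero)
  -- apply the ultrametric lemma
  have hkmem : k ∈ Finset.Icc (p ^ i) n := Finset.mem_Icc.2 ⟨hk1, hk2⟩
  have hfk : w (f k) = (((n : ℤ) * cb + (n : ℤ) * c + (k : ℤ) : ℤ) : WithTop ℤ) :=
    hfval k cb c hcb hc
  have hle : w (∑ j ∈ Finset.Icc (p ^ i) n, f j) ≤ w (f k) :=
    val_sum_le_of_distinct w hdist hkmem (by rw [hfk]; exact WithTop.coe_ne_top)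
  rw [← hsum, AddValuation.map_mul, AddValuation.map_pow, hα, ← WithTop.coe_nsmul, hfk] at hle
  -- w (rho) is finite
  have hrfin : w (rho φ α n (p ^ i)) ≠ ⊤ := by
    intro h
    rw [h, top_add] at hle
    exact (lt_irrefl _ (lt_of_le_of_lt hle (WithTop.coe_lt_top _)))
  obtain ⟨c', hc'⟩ := WithTop.ne_top_iff_exists.1 hrfin
  have hLq := habove c' hc'.symm
  rw [← hc', ← WithTop.coe_add, WithTop.coe_le_coe] at hle
  -- now everything is an integer inequality
  have hle' : c' + (n • (1 : ℤ)) ≤ (n : ℤ) * cb + (n : ℤ) * c + (k : ℤ) := hle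
  have hleq : (c' : ℚ) + n ≤ (n : ℚ) * cb + n * c + k := by
    have h2 := hle'
    simp only [nsmul_eq_mul, mul_one] at h2
    exact_mod_cast h2
  have hn' : (0 : ℚ) < n := by exact_mod_cast hn
  rw [one_div, inv_mul_eq_div]
  rw [show ∀ A B : ℚ, A / (n:ℚ) + 1 - B < (c:ℚ) ↔ A / n < c - 1 + B from fun A B => by
    constructor <;> intro h <;> linarith]
  rw [div_lt_iff₀ hn']
  nlinarith [hLq, hleq]
end

section
/- Let φ ∈ O_K[x] be an Eisenstein polynomial of degree n with root α and ramification polynomial ρ. If (p^s, J) with s ≥ 1 and J > 0 is a point on the ramification polygon of φ (i.e. v_α(ρ_{p^s}) = J and (p^s, J) lies on the lower convex hull of the points (i, v_α(ρ_i))), then p^s divides J. Equivalently, the key inequality proved is: writing J = a·n + b with 0 < b < n, if t := v_p(b) < s then v_α(ρ_{p^t}) ≤ J, so (p^s, J) could not lie on the polygon. -/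
/-!
The summands `C(k,i) φ_k α^(k-n)` of `ρ_i` have valuations `n·v(C(k,i) φ_k) + k - n`, which are
pairwise distinct modulo `n`; hence `v_α(ρ_i)` is the least of them, and `J = v_α(ρ_{p^s})` is
attained at some `k₀`, so that `J ≡ k₀ (mod n)`. For every `k`, the binomial coefficient
`C(k, p^{v_p(k)})` is prime to `p` (Lucas), hence a unit for `v`, which gives
`v_α(ρ_{p^{v_p(k)}}) ≤ n·v(φ_k) + k - n`. For `k = k₀` this is at most `J`, and for `k = n` it
is `0 < J`. By convexity, no point strictly left of `p^s` lies at height `≤ J`, because the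
polygon ends at `(n, 0)` below `J`. Hence `p^s` divides `k₀` and `n`, and therefore `J`. Finally,
if `J = a n + b` with `0 < b < n`, then `b = k₀`, and the same bound reads
`v_α(ρ_{p^{v_p(b)}}) ≤ J`.
-/

open Polynomial

namespace RamificationStmt8

variable {K L : Type*} [Field K] [Field L]

def IsEisenstein (v : AddValuation K (WithTop ℤ)) (φ : Polynomial K) : Prop :=
  φ.Monic ∧ (∀ i < φ.natDegree, ((1 : ℤ) : WithTop ℤ) ≤ v (φ.coeff i)) ∧
    v (φ.coeff 0) = ((1 : ℤ) : WithTop ℤ)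

/-- Coefficients of the ramification polynomial `ρ(x) = φ(αx+α)/α^n`. -/
noncomputable def rho [Algebra K L] (φ : Polynomial K) (α : L) (n i : ℕ) : L :=
  ∑ k ∈ Finset.Icc i n, (Nat.choose k i : L) * (algebraMap K L (φ.coeff k)) * α ^ ((k : ℤ) - (n : ℤ))

/-- `(x0, J)` is a point on the ramification polygon (on the lower convex hull of the points
`(i, v_α(ρ_i))`, `1 ≤ i ≤ n`). -/
def OnRamPolygon (w : AddValuation L (WithTop ℤ)) (ρ : ℕ → L) (n x0 : ℕ) (J : ℤ) : Prop :=
  w (ρ x0) = (J : WithTop ℤ) ∧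
    ∃ lam : ℚ, ∀ i : ℕ, 1 ≤ i → i ≤ n → ∀ c : ℤ, w (ρ i) = (c : WithTop ℤ) →
      (J : ℚ) + lam * ((i : ℚ) - (x0 : ℚ)) ≤ (c : ℚ)

end RamificationStmt8

theorem Nat.Prime.not_dvd_choose_pow_padicValNat {p b : ℕ} (hp : p.Prime) (hb : b ≠ 0) :
    ¬ p ∣ b.choose (p ^ padicValNat p b) := by
  have := Fact.mk hp
  have hmod := Choose.choose_pow_mul_pow_mul_modEq_choose_nat (p := p) (k := b.factorization p)
    (a := ordCompl[p] b) (b := 1)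
  rw [mul_one, Nat.ordProj_mul_ordCompl_eq_self, Nat.choose_one_right,
    Nat.factorization_def b hp] at hmod
  rw [Nat.ModEq.dvd_iff hmod dvd_rfl]
  simpa [Nat.factorization_def b hp] using Nat.not_dvd_ordCompl hp hb

namespace AddValuation

section Monoid

variable {R Γ₀ : Type*} [Ring R] [LinearOrderedAddCommMonoidWithTop Γ₀] (v : AddValuation R Γ₀)

theorem map_natCast_nonneg (m : ℕ) : 0 ≤ v (m : R) := by
  induction m with
  | zero => rw [Nat.cast_zero, v.map_zero]; exact le_top
  | succ m ih => rw [Nat.cast_succ]; exact v.map_le_add ih v.map_one.ge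

theorem map_intCast_nonneg (z : ℤ) : 0 ≤ v (z : R) := by
  cases z with
  | ofNat m => rw [Int.ofNat_eq_natCast, Int.cast_natCast]; exact v.map_natCast_nonneg m
  | negSucc m => rw [Int.cast_negSucc, v.map_neg]; exact v.map_natCast_nonneg _

theorem map_natCast_eq_zero_of_not_dvd {p u : ℕ} (hp : p.Prime) (hvp : 0 < v p)
    (hpu : ¬ p ∣ u) : v u = 0 := by
  -- Bezout: `1 = a u + b p`, and `0 < v (b p)` forces `v (a u) ≤ v 1 = 0`.
  obtain ⟨a, b, hab⟩ := Nat.isCoprime_iff_coprime.2 ((hp.coprime_iff_not_dvd.2 hpu).symm)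
  refine le_antisymm (not_lt.1 fun hvu => ?_) (v.map_natCast_nonneg u)
  have h1 : (1 : R) = a * u + b * p := by exact_mod_cast congrArg (Int.cast (R := R)) hab.symm
  have : 0 < v 1 := h1 ▸ v.map_lt_add
    (v.map_mul _ _ ▸ hvu.trans_le (le_add_of_nonneg_left (v.map_intCast_nonneg a)))
    (v.map_mul _ _ ▸ hvp.trans_le (le_add_of_nonneg_left (v.map_intCast_nonneg b)))
  exact this.ne' v.map_one

theorem map_sum_eq_inf {ι : Type*} (s : Finset ι) (f : ι → R)
    (hf : Set.InjOn (fun i => v (f i)) {i | i ∈ s ∧ v (f i) ≠ ⊤}) :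
    v (∑ i ∈ s, f i) = s.inf fun i => v (f i) := by
  classical
  refine le_antisymm ?_ (v.map_le_sum fun i hi => Finset.inf_le hi)
  rcases s.eq_empty_or_nonempty with rfl | hs
  · simp
  obtain ⟨j, hj, hjinf⟩ := s.exists_mem_eq_inf hs fun i => v (f i)
  rcases eq_or_ne (v (f j)) ⊤ with htop | htop
  · rw [hjinf, htop]; exact le_top
  have hlt : ∀ i ∈ s \ {j}, v (f j) < v (f i) := by
    intro i hi
    obtain ⟨his, hij⟩ := Finset.mem_sdiff.1 hi
    refine lt_of_le_of_ne (hjinf ▸ Finset.inf_le his) fun heq => ?_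
    exact Finset.notMem_singleton.1 hij (hf ⟨his, heq ▸ htop⟩ ⟨hj, htop⟩ heq.symm)
  rw [Finset.sum_eq_add_sum_sdiff_singleton_of_mem hj,
    v.map_add_eq_of_lt_left (v.map_lt_sum htop hlt), hjinf]

end Monoid

theorem map_zpow_of_map_eq_coe {K : Type*} [Field K] (v : AddValuation K (WithTop ℤ)) {x : K}
    {a : ℤ} (hx : v x = a) (m : ℤ) : v (x ^ m) = ((m * a : ℤ) : WithTop ℤ) := by
  have hx0 : x ≠ 0 := (v.ne_top_iff).1 (hx ▸ WithTop.coe_ne_top)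
  induction m using Int.induction_on with
  | zero => simp
  | succ m ih =>
    rw [zpow_add_one₀ hx0, v.map_mul, ih, hx, ← WithTop.coe_add]
    ring_nf
  | pred m ih =>
    rw [zpow_sub_one₀ hx0, v.map_mul, ih, v.map_inv, hx,
      ← WithTop.LinearOrderedAddCommGroup.coe_neg, ← WithTop.coe_add]
    ring_nf

end AddValuation

theorem WithTop.nsmul_top {α : Type*} [AddMonoid α] {n : ℕ} (hn : n ≠ 0) :
    n • (⊤ : WithTop α) = ⊤ := by
  obtain ⟨m, rfl⟩ := Nat.exists_eq_succ_of_ne_zero hn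
  rw [succ_nsmul, add_top]

theorem WithTop.eq_of_nsmul_add_coe_eq {n : ℕ} {x y : WithTop ℤ} {a b : ℤ}
    (hne : n • x + a ≠ ⊤) (h : n • x + a = n • y + b) (hab : |a - b| < n) : a = b := by
  have hn : n ≠ 0 := by rintro rfl; exact (abs_nonneg _).not_gt (by simpa using hab)
  lift x to ℤ using fun hx => hne (by rw [hx, nsmul_top hn, top_add])
  lift y to ℤ using fun hy => hne (by rw [h, hy, nsmul_top hn, top_add])
  simp only [← WithTop.coe_nsmul, ← WithTop.coe_add, WithTop.coe_inj, nsmul_eq_mul] at h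
  exact sub_eq_zero.1 (Int.eq_zero_of_abs_lt_dvd ⟨y - x, by linarith⟩ hab)

namespace RamificationStmt8

open Finset

variable {K L : Type*} [Field K] [Field L] [Algebra K L]

noncomputable def rhoTerm (φ : K[X]) (α : L) (n i k : ℕ) : L :=
  (k.choose i : L) * algebraMap K L (φ.coeff k) * α ^ ((k : ℤ) - n)

theorem rho_eq_sum_rhoTerm (φ : K[X]) (α : L) (n i : ℕ) :
    rho φ α n i = ∑ k ∈ Icc i n, rhoTerm φ α n i k :=
  rfl

theorem rho_self {φ : K[X]} (hφ : φ.Monic) {n : ℕ} (hdeg : φ.natDegree = n) (α : L) :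
    rho φ α n n = 1 := by
  simp [rho, ← hdeg, hφ.coeff_natDegree]

section Valuation

variable {v : AddValuation K (WithTop ℤ)} {w : AddValuation L (WithTop ℤ)} {φ : K[X]} {α : L}
  {n : ℕ} (hα : w α = ((1 : ℤ) : WithTop ℤ)) (hcompat : ∀ x : K, w (algebraMap K L x) = n • v x)
include hα hcompat

theorem valuation_rhoTerm (i k : ℕ) :
    w (rhoTerm φ α n i k) =
      n • v (k.choose i * φ.coeff k) + (((k : ℤ) - n : ℤ) : WithTop ℤ) := by
  rw [rhoTerm, w.map_mul, w.map_mul, w.map_zpow_of_map_eq_coe hα, mul_one,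
    ← map_natCast (algebraMap K L), hcompat, hcompat, v.map_mul, smul_add]

theorem nsmul_valuation_coeff_add_le_valuation_rhoTerm (i k : ℕ) :
    n • v (φ.coeff k) + (((k : ℤ) - n : ℤ) : WithTop ℤ) ≤ w (rhoTerm φ α n i k) := by
  rw [valuation_rhoTerm hα hcompat, v.map_mul]
  gcongr
  exact le_add_of_nonneg_left (v.map_natCast_nonneg _)

/-- The summands of `ρ_i` have pairwise distinct valuations modulo `n`, so none of them cancel. -/
theorem valuation_rho_eq_inf {i : ℕ} (hi : 1 ≤ i) :
    w (rho φ α n i) = (Icc i n).inf fun k => w (rhoTerm φ α n i k) := by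
  rw [rho_eq_sum_rhoTerm]
  refine w.map_sum_eq_inf _ _ fun k ⟨hk, htop⟩ k' ⟨hk', _⟩ heq => ?_
  simp only [valuation_rhoTerm hα hcompat] at heq htop
  have := WithTop.eq_of_nsmul_add_coe_eq htop heq (abs_sub_lt_iff.2 ?_)
  · omega
  · simp only [mem_Icc] at hk hk'
    omega

theorem exists_rhoTerm_of_valuation_rho_eq {i : ℕ} (hi : 1 ≤ i) {J : ℤ}
    (hJ : w (rho φ α n i) = J) :
    ∃ k ∈ Icc i n, (∃ z : ℤ, J = n * z + (k - n)) ∧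
      n • v (φ.coeff k) + (((k : ℤ) - n : ℤ) : WithTop ℤ) ≤ J := by
  rw [valuation_rho_eq_inf hα hcompat hi] at hJ
  have hne : (Icc i n).Nonempty := nonempty_iff_ne_empty.2 fun h => by simp [h] at hJ
  obtain ⟨k, hk, hinf⟩ := exists_mem_eq_inf _ hne fun k => w (rhoTerm φ α n i k)
  rw [hinf] at hJ
  refine ⟨k, hk, ?_, hJ ▸ nsmul_valuation_coeff_add_le_valuation_rhoTerm hα hcompat i k⟩
  rw [valuation_rhoTerm hα hcompat] at hJ
  obtain ⟨z, hz⟩ := (WithTop.ne_top_iff_exists (x := v (k.choose i * φ.coeff k))).1 fun h => by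
    rw [h, WithTop.nsmul_top (by simp at hk; omega), top_add] at hJ
    exact WithTop.top_ne_coe hJ
  rw [← hz, ← WithTop.coe_nsmul, ← WithTop.coe_add, WithTop.coe_inj, nsmul_eq_mul] at hJ
  exact ⟨z, hJ.symm⟩

theorem valuation_rho_pow_padicValNat_le {p : ℕ} (hp : p.Prime) (hvp : 0 < v (p : K)) {k : ℕ}
    (hk : 1 ≤ k) (hkn : k ≤ n) :
    w (rho φ α n (p ^ padicValNat p k)) ≤
      n • v (φ.coeff k) + (((k : ℤ) - n : ℤ) : WithTop ℤ) := by
  have hmem : k ∈ Icc (p ^ padicValNat p k) n :=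
    mem_Icc.2 ⟨Nat.le_of_dvd hk pow_padicValNat_dvd, hkn⟩
  rw [valuation_rho_eq_inf hα hcompat (Nat.one_le_pow _ _ hp.pos)]
  refine (inf_le hmem).trans_eq ?_
  rw [valuation_rhoTerm hα hcompat, v.map_mul,
    v.map_natCast_eq_zero_of_not_dvd hp hvp (hp.not_dvd_choose_pow_padicValNat (by omega)),
    zero_add]

theorem pow_dvd_of_forall_lt_valuation_rho {p : ℕ} (hp : p.Prime) (hvp : 0 < v (p : K)) {s : ℕ}
    {J : ℤ} (hleft : ∀ j, 1 ≤ j → j < p ^ s → (J : WithTop ℤ) < w (rho φ α n j)) {k : ℕ}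
    (hk : 1 ≤ k) (hkn : k ≤ n) (hle : n • v (φ.coeff k) + (((k : ℤ) - n : ℤ) : WithTop ℤ) ≤ J) :
    (p : ℤ) ^ s ∣ k := by
  refine Int.natCast_dvd_natCast.2 ((Nat.pow_dvd_pow p ?_).trans pow_padicValNat_dvd)
  by_contra! hlt
  exact (hleft _ (Nat.one_le_pow _ _ hp.pos) (Nat.pow_lt_pow_right hp.one_lt hlt)).not_ge
    ((valuation_rho_pow_padicValNat_le hα hcompat hp hvp hk hkn).trans hle)

end Valuation

theorem OnRamPolygon.coe_lt_valuation_of_lt {w : AddValuation L (WithTop ℤ)} {ρ : ℕ → L}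
    {n x0 : ℕ} {J : ℤ} (hon : OnRamPolygon w ρ n x0 J) {m : ℕ} (hm : m ≤ n) (hxm : x0 < m)
    {c : ℤ} (hc : w (ρ m) = c) (hcJ : c < J) {i : ℕ} (hi : 1 ≤ i) (hix : i < x0) :
    (J : WithTop ℤ) < w (ρ i) := by
  obtain ⟨-, lam, hlam⟩ := hon
  have hlam_neg : lam < 0 := by
    have hm' := hlam m (by omega) hm c hc
    have hxm' : (x0 : ℚ) < m := by exact_mod_cast hxm
    have hcJ' : (c : ℚ) < J := by exact_mod_cast hcJ
    nlinarith
  refine lt_of_not_ge fun hle => ?_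
  obtain ⟨c', hc', hc'J⟩ := WithTop.le_coe_iff.1 hle
  have hi' := hlam i hi (by omega) c' hc'
  have hix' : (i : ℚ) < x0 := by exact_mod_cast hix
  have hc'J' : (c' : ℚ) ≤ J := by exact_mod_cast hc'J
  nlinarith

theorem OnRamPolygon.coe_lt_valuation_rho {w : AddValuation L (WithTop ℤ)} {φ : K[X]}
    (hφ : φ.Monic) {n : ℕ} (hdeg : φ.natDegree = n)
    {α : L} {x0 : ℕ} {J : ℤ} (hon : OnRamPolygon w (fun i => rho φ α n i) n x0 J) (hJ : 0 < J)
    (hx0 : x0 ≤ n) {i : ℕ} (hi : 1 ≤ i) (hix : i < x0) : (J : WithTop ℤ) < w (rho φ α n i) := by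
  have hρn : w (rho φ α n n) = ((0 : ℤ) : WithTop ℤ) := by simp [rho_self hφ hdeg]
  refine hon.coe_lt_valuation_of_lt le_rfl (lt_of_le_of_ne hx0 fun h => ?_) hρn hJ hi hix
  have := hon.1
  rw [h, hρn, WithTop.coe_inj] at this
  exact hJ.ne this

end RamificationStmt8

open RamificationStmt8 in
theorem stmt8_general {p : ℕ} (hp : p.Prime) {K L : Type*} [Field K] [Field L] [Algebra K L]
    (v : AddValuation K (WithTop ℤ))
    (hresidue_char : 0 < v (p : K))
    (w : AddValuation L (WithTop ℤ))
    (φ : Polynomial K) (n : ℕ) (hdeg : φ.natDegree = n)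
    (hEis : IsEisenstein v φ)
    (α : L) (hα : w α = ((1 : ℤ) : WithTop ℤ))
    (hcompat : ∀ x : K, w (algebraMap K L x) = n • v x)
    (s : ℕ) (J : ℤ) (hJ : 0 < J)
    (hon : OnRamPolygon w (fun i => rho φ α n i) n (p ^ s) J) :
    (p : ℤ) ^ s ∣ J ∧
      ∀ (a : ℤ) (b : ℕ), J = a * n + b → 0 < b → b < n → padicValNat p b < s →
        w (rho φ α n (p ^ padicValNat p b)) ≤ (J : WithTop ℤ) := by
  have hps : 1 ≤ p ^ s := Nat.one_le_pow _ _ hp.pos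
  obtain ⟨k0, hk0, ⟨z, hJz⟩, hk0le⟩ := exists_rhoTerm_of_valuation_rho_eq hα hcompat hps hon.1
  rw [Finset.mem_Icc] at hk0
  have hleft := fun j => hon.coe_lt_valuation_rho hEis.1 hdeg hJ (hk0.1.trans hk0.2) (i := j)
  have hps_n : (p : ℤ) ^ s ∣ n := pow_dvd_of_forall_lt_valuation_rho hα hcompat hp hresidue_char
    hleft (by omega) le_rfl (by simp [← hdeg, hEis.1.coeff_natDegree, hJ.le])
  have hps_k0 : (p : ℤ) ^ s ∣ k0 := pow_dvd_of_forall_lt_valuation_rho hα hcompat hp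
    hresidue_char hleft (by omega) hk0.2 hk0le
  refine ⟨hJz ▸ dvd_add (hps_n.mul_right z) (dvd_sub hps_k0 hps_n), fun a b hab hb hbn _ => ?_⟩
  -- `b ≡ J ≡ k0 (mod n)` with both in `(0, n]`
  obtain rfl : k0 = b := by
    have := Int.eq_zero_of_abs_lt_dvd (m := n) (x := k0 - b)
      ⟨a + 1 - z, by linear_combination hab - hJz⟩ (abs_sub_lt_iff.2 ⟨by omega, by omega⟩)
    omega
  exact (valuation_rho_pow_padicValNat_le hα hcompat hp hresidue_char (by omega) hk0.2).trans
    hk0le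

open RamificationStmt8 in
/-- Let `φ ∈ O_K[x]` be Eisenstein of degree `n` with root `α` and ramification
polynomial `ρ`.  If `(p^s, J)` with `s ≥ 1` and `J > 0` is a point on the ramification polygon of
`φ`, then `p^s ∣ J`.  Moreover (the key inequality): writing `J = a·n + b` with `0 < b < n`, if
`t := v_p(b) < s` then `v_α(ρ_{p^t}) ≤ J`. -/
theorem stmt8 {p : ℕ} (hp : p.Prime) {K L : Type*} [Field K] [CharZero K] [Field L] [Algebra K L]
    (v : AddValuation K (WithTop ℤ)) (π : K) (hπ : v π = ((1 : ℤ) : WithTop ℤ))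
    (hresidue_char : 0 < v (p : K))
    (w : AddValuation L (WithTop ℤ))
    (φ : Polynomial K) (n : ℕ) (hn : 0 < n) (hdeg : φ.natDegree = n)
    (hEis : IsEisenstein v φ)
    (α : L) (hroot : Polynomial.aeval α φ = 0) (hα : w α = ((1 : ℤ) : WithTop ℤ))
    (hcompat : ∀ x : K, w (algebraMap K L x) = n • v x)
    (s : ℕ) (hs : 1 ≤ s) (J : ℤ) (hJ : 0 < J)
    (hon : OnRamPolygon w (fun i => rho φ α n i) n (p ^ s) J) :
    (p : ℤ) ^ s ∣ J ∧
      ∀ (a : ℤ) (b : ℕ), J = a * n + b → 0 < b → b < n → padicValNat p b < s →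
        w (rho φ α n (p ^ padicValNat p b)) ≤ (J : WithTop ℤ) :=
  stmt8_general hp v hresidue_char w φ n hdeg hEis α hα hcompat s J hJ hon
end

section
/- Let φ ∈ O_K[x] be Eisenstein of degree n. Let S be a segment of the ramification polygon of φ with endpoints (p^{s_k}, a_k n + b_k) and (p^{s_l}, a_l n + b_l), slope −h/e, and residual polynomial A(x) = Σ_j A_j x^j. If (p^{s_i}, a_i n + b_i) is a point on S with b_i ≠ 0, then the π-adic digit φ_{b_i, j} of φ_{b_i} with j = a_i + 1 − v_π(C(b_i, p^{s_i})) satisfies, in 𝕂: residue(φ_{b_i,j}) = A_{(p^{s_i}−p^{s_k})/e} · residue( C(b_i,p^{s_i})^{−1}·(−φ_{0,1})^{a_i+1}·π^{v_π(C(b_i,p^{s_i}))} ). -/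
open Polynomial

namespace RamificationStmt16

variable {K L : Type*} [Field K] [Field L]

def IsEisenstein (v : AddValuation K (WithTop ℤ)) (φ : Polynomial K) : Prop :=
  φ.Monic ∧ (∀ i < φ.natDegree, ((1 : ℤ) : WithTop ℤ) ≤ v (φ.coeff i)) ∧
    v (φ.coeff 0) = ((1 : ℤ) : WithTop ℤ)

/-- Coefficients of the ramification polynomial `ρ(x) = φ(αx+α)/α^n`. -/
noncomputable def rho [Algebra K L] (φ : Polynomial K) (α : L) (n i : ℕ) : L :=
  ∑ k ∈ Finset.Icc i n, (Nat.choose k i : L) * (algebraMap K L (φ.coeff k)) * α ^ ((k : ℤ) - (n : ℤ))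

/-- The valuation ring `O_K = {x | v(x) ≥ 0}`. -/
def vintegers (v : AddValuation K (WithTop ℤ)) : Subring K where
  carrier := {x | 0 ≤ v x}
  zero_mem' := by simp [AddValuation.map_zero]
  one_mem' := by simp [AddValuation.map_one]
  add_mem' := by
    intro a b ha hb
    exact le_trans (le_min ha hb) (v.map_add a b)
  neg_mem' := by
    intro a ha
    simpa [AddValuation.map_neg] using ha
  mul_mem' := by
    intro a b ha hb
    simp only [Set.mem_setOf_eq] at *
    rw [v.map_mul]
    exact add_nonneg ha hb

open scoped Classical in
/-- Reduction modulo the maximal ideal, extended by `0` outside the valuation ring. -/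
noncomputable def vred {𝕜 : Type*} [Field 𝕜] (v : AddValuation K (WithTop ℤ))
    (res : vintegers v →+* 𝕜) (x : K) : 𝕜 :=
  if h : x ∈ vintegers v then res ⟨x, h⟩ else 0

end RamificationStmt16


namespace Stmt16Proof

variable {K : Type*} [Field K]

lemma nsmul_coe (n : ℕ) (m : ℤ) : n • ((m:ℤ) : WithTop ℤ) = ((n * m : ℤ) : WithTop ℤ) := by
  rw [← WithTop.coe_nsmul]; norm_cast

lemma coe_add_one_le {c : ℤ} {x : WithTop ℤ} (h : (c : WithTop ℤ) < x) :
    ((c + 1 : ℤ) : WithTop ℤ) ≤ x := by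
  cases x with
  | top => exact le_top
  | coe m => exact_mod_cast (by exact_mod_cast h : c < m)

lemma val_zpow (v : AddValuation K (WithTop ℤ)) {x : K} (hx : v x = ((1:ℤ) : WithTop ℤ))
    (z : ℤ) : v (x ^ z) = (z : WithTop ℤ) := by
  obtain ⟨m, rfl | rfl⟩ := z.eq_nat_or_neg
  · rw [zpow_natCast, v.map_pow, hx, nsmul_coe]
    norm_num
  · rw [zpow_neg, v.map_inv, zpow_natCast, v.map_pow, hx, nsmul_coe]
    norm_num

lemma val_natCast_nonneg (v : AddValuation K (WithTop ℤ)) (m : ℕ) : 0 ≤ v (m : K) := by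
  induction m with
  | zero => simp [AddValuation.map_zero]
  | succ k ih =>
      push_cast
      refine le_trans ?_ (v.map_add _ _)
      simp only [le_min_iff]
      exact ⟨ih, by simp [AddValuation.map_one]⟩

lemma val_sum_ge (v : AddValuation K (WithTop ℤ)) (s : Finset ℕ) (t : ℕ → K) :
    s.inf (fun i => v (t i)) ≤ v (∑ i ∈ s, t i) := by
  induction s using Finset.cons_induction with
  | empty => simp [AddValuation.map_zero]
  | cons a s ha ih =>
      rw [Finset.sum_cons, Finset.inf_cons]
      exact le_trans (min_le_min le_rfl ih) (v.map_add _ _)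

lemma val_sum_lt (v : AddValuation K (WithTop ℤ)) (s : Finset ℕ) (t : ℕ → K) (c : ℤ)
    (h : ∀ i ∈ s, (c : WithTop ℤ) < v (t i)) : (c : WithTop ℤ) < v (∑ i ∈ s, t i) := by
  have h1 : ((c+1 : ℤ) : WithTop ℤ) ≤ s.inf (fun i => v (t i)) :=
    Finset.le_inf fun i hi => coe_add_one_le (h i hi)
  calc (c : WithTop ℤ) < ((c+1:ℤ) : WithTop ℤ) := by exact_mod_cast lt_add_one c
  _ ≤ _ := le_trans h1 (val_sum_ge v s t)

lemma val_sum_unique (v : AddValuation K (WithTop ℤ)) (s : Finset ℕ) (t : ℕ → K)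
    (hdist : ∀ i ∈ s, ∀ j ∈ s, i ≠ j → v (t i) = v (t j) → v (t i) = ⊤)
    (c : ℤ) (hc : v (∑ i ∈ s, t i) = (c : WithTop ℤ)) :
    ∃ i ∈ s, v (t i) = (c : WithTop ℤ) ∧
      ∀ j ∈ s, j ≠ i → (c : WithTop ℤ) < v (t j) := by
  have hTle : s.inf (fun i => v (t i)) ≤ (c : WithTop ℤ) := hc ▸ val_sum_ge v s t
  have hTne : s.inf (fun i => v (t i)) ≠ ⊤ := fun h => by simp [h] at hTle
  have hs : s.Nonempty := by
    by_contra hemp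
    rw [Finset.not_nonempty_iff_eq_empty] at hemp
    simp [hemp] at hTne
  obtain ⟨i0, hi0, hval⟩ := Finset.exists_mem_eq_inf s hs (fun i => v (t i))
  have huniq : ∀ j ∈ s, j ≠ i0 → v (t i0) < v (t j) := by
    intro j hj hne
    have hle : s.inf (fun i => v (t i)) ≤ v (t j) := Finset.inf_le hj
    rw [hval] at hle
    rcases lt_or_eq_of_le hle with h | h
    · exact h
    · exfalso
      apply hTne
      rw [hval]
      have := hdist j hj i0 hi0 (fun h' => hne h') h.symm
      rw [← h] at this
      exact this
  have hsum : v (∑ i ∈ s, t i) = v (t i0) := by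
    rw [← Finset.add_sum_erase s t hi0]
    rcases eq_or_ne (s.erase i0) ∅ with he | he
    · simp [he, AddValuation.map_zero]
    · apply AddValuation.map_add_eq_of_lt_left
      have : ∀ j ∈ s.erase i0, v (t i0) + 1 ≤ v (t j) := by
        intro j hj
        have h1 := huniq j (Finset.mem_of_mem_erase hj) (Finset.ne_of_mem_erase hj)
        have hfin : v (t i0) ≠ ⊤ := hval ▸ hTne
        lift v (t i0) to ℤ using hfin with m hm
        rw [show ((m:ℤ):WithTop ℤ) + 1 = ((m+1:ℤ):WithTop ℤ) by push_cast; ring]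
        exact coe_add_one_le h1
      calc v (t i0) < v (t i0) + 1 := by
            have hfin : v (t i0) ≠ ⊤ := hval ▸ hTne
            lift v (t i0) to ℤ using hfin with m hm
            exact_mod_cast lt_add_one m
      _ ≤ (s.erase i0).inf (fun i => v (t i)) := Finset.le_inf this
      _ ≤ _ := val_sum_ge v _ t
  refine ⟨i0, hi0, by rw [← hsum, hc], fun j hj hne => ?_⟩
  rw [hc] at hsum
  exact hsum ▸ huniq j hj hne



lemma coe_add_lt {a b : ℤ} {x : WithTop ℤ} (h : (b : WithTop ℤ) < x) :
    ((a + b : ℤ) : WithTop ℤ) < (a : WithTop ℤ) + x := by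
  cases x with
  | top => simp only [WithTop.add_top]; exact WithTop.coe_lt_top _
  | coe m =>
      have : b < m := by exact_mod_cast h
      exact_mod_cast (by omega : a + b < a + m)

lemma coe_add_lt' {a b : ℤ} {x : WithTop ℤ} (h : (b : WithTop ℤ) < x) :
    ((b + a : ℤ) : WithTop ℤ) < x + (a : WithTop ℤ) := by
  rw [add_comm x, show b + a = a + b from by ring]
  exact coe_add_lt h

lemma coe_add_le {a b : ℤ} {x y : WithTop ℤ} (hx : (a : WithTop ℤ) ≤ x)
    (hy : (b : WithTop ℤ) ≤ y) : ((a + b : ℤ) : WithTop ℤ) ≤ x + y := by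
  rw [show ((a + b : ℤ) : WithTop ℤ) = ((a:ℤ) : WithTop ℤ) + ((b:ℤ) : WithTop ℤ) from by
    push_cast; rfl]
  exact add_le_add hx hy

lemma le_nsmul {c : ℤ} {x : WithTop ℤ} (n : ℕ) (h : ((c:ℤ) : WithTop ℤ) ≤ x) :
    ((n * c : ℤ) : WithTop ℤ) ≤ n • x := by
  rw [← nsmul_coe]
  exact nsmul_le_nsmul_right h n

lemma nsmul_reflect {c : ℤ} {x : WithTop ℤ} {n : ℕ} (hn : 0 < n)
    (h : ((c * n : ℤ) : WithTop ℤ) < n • x) : ((c:ℤ) : WithTop ℤ) < x := by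
  cases x with
  | top => exact WithTop.coe_lt_top _
  | coe m =>
      rw [nsmul_coe] at h
      have h1 : c * n < n * m := by exact_mod_cast h
      have : c < m := by
        rcases le_or_gt m c with h2 | h2
        · nlinarith
        · exact h2
      exact_mod_cast this

lemma val_add_lt (v : AddValuation K (WithTop ℤ)) {c : ℤ} {a b : K}
    (ha : (c : WithTop ℤ) < v a) (hb : (c : WithTop ℤ) < v b) :
    (c : WithTop ℤ) < v (a + b) :=
  lt_of_lt_of_le (lt_min ha hb) (v.map_add a b)

lemma val_sub_lt (v : AddValuation K (WithTop ℤ)) {c : ℤ} {a b : K}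
    (ha : (c : WithTop ℤ) < v a) (hb : (c : WithTop ℤ) < v b) :
    (c : WithTop ℤ) < v (a - b) := by
  rw [sub_eq_add_neg]
  exact val_add_lt v ha (by rwa [v.map_neg])

lemma val_zpow_zero (v : AddValuation K (WithTop ℤ)) {x : K}
    (hx : v x = ((0:ℤ) : WithTop ℤ)) (z : ℤ) : v (x ^ z) = ((0:ℤ) : WithTop ℤ) := by
  obtain ⟨m, rfl | rfl⟩ := z.eq_nat_or_neg
  · rw [zpow_natCast, v.map_pow, hx, nsmul_coe]; norm_num
  · rw [zpow_neg, v.map_inv, zpow_natCast, v.map_pow, hx, nsmul_coe]; norm_num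

lemma val_pow_sub_pow (v : AddValuation K (WithTop ℤ)) {x y : K} {c : ℤ}
    (hx : v x = (c : WithTop ℤ)) (hy : v y = (c : WithTop ℤ))
    (hxy : (c : WithTop ℤ) < v (x - y)) :
    ∀ N : ℕ, 1 ≤ N → ((N * c : ℤ) : WithTop ℤ) < v (x ^ N - y ^ N) := by
  intro N hN
  induction N, hN using Nat.le_induction with
  | base => simpa using hxy
  | succ M hM ih =>
      have hid : x ^ (M+1) - y ^ (M+1) = x ^ M * (x - y) + (x ^ M - y ^ M) * y := by ring
      rw [hid]
      have h1 : (((M+1 : ℕ) * c : ℤ) : WithTop ℤ) < v (x ^ M * (x - y)) := by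
        rw [v.map_mul, v.map_pow, hx, nsmul_coe]
        rw [show ((M+1:ℕ) * c : ℤ) = (M * c : ℤ) + c from by push_cast; ring]
        exact coe_add_lt hxy
      have h2 : (((M+1 : ℕ) * c : ℤ) : WithTop ℤ) < v ((x ^ M - y ^ M) * y) := by
        rw [v.map_mul, hy]
        rw [show ((M+1:ℕ) * c : ℤ) = (M * c : ℤ) + c from by push_cast; ring]
        exact coe_add_lt' ih
      exact val_add_lt v h1 h2

lemma int_eq_of_mul_bound {n d x : ℤ} (hn : 0 < n) (hx : x = n * d)
    (h1 : -n < x) (h2 : x < n) : x = 0 := by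
  rcases lt_trichotomy d 0 with h | h | h
  · nlinarith
  · simp [hx, h]
  · nlinarith

end Stmt16Proof

open Stmt16Proof in
open RamificationStmt16 in
/-- Let `φ ∈ O_K[x]` be Eisenstein of degree `n`, `S` a segment of the
ramification polygon of `φ` with endpoints `(p^{s_k}, a_k n + b_k)`, `(p^{s_l}, a_l n + b_l)`,
slope `−h/e` and residual polynomial `A = ∑_j A_j x^j` (expressed via a fixed multiplicative
section `lift : 𝕜 → K` of the residue map: the coefficient `ρ_{je+p^{s_k}} α^{jh − J_k}` is
congruent to `lift (A_j)` modulo the maximal ideal).  If `(p^{s_i}, a_i n + b_i)` is a point on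
`S` with `b_i ≠ 0`, then the `π`-adic digit `φ_{b_i,j}` of `φ_{b_i}` with
`j = a_i + 1 − v_π(C(b_i,p^{s_i}))` satisfies
`residue(φ_{b_i,j}) = A_{(p^{s_i}−p^{s_k})/e} · residue(C(b_i,p^{s_i})^{-1}·(−φ_{0,1})^{a_i+1}·π^{v_π(C(b_i,p^{s_i}))})`. -/
theorem stmt16 {p : ℕ} (hp : p.Prime) {K L 𝕜 : Type*} [Field K] [CharZero K] [Field L]
    [Field 𝕜] [Algebra K L]
    (v : AddValuation K (WithTop ℤ)) (π : K) (hπ : v π = ((1 : ℤ) : WithTop ℤ))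
    (hresidue_char : 0 < v (p : K))
    (w : AddValuation L (WithTop ℤ))
    (res : vintegers v →+* 𝕜) (hres_surj : Function.Surjective res)
    (hres_ker : ∀ x : vintegers v, res x = 0 ↔ 0 < v (x : K))
    (lift : 𝕜 → K) (hlift_int : ∀ x : 𝕜, 0 ≤ v (lift x))
    (hlift_sect : ∀ x : 𝕜, vred v res (lift x) = x)
    (φ : Polynomial K) (n : ℕ) (hn : 0 < n) (hdeg : φ.natDegree = n)
    (hEis : IsEisenstein v φ)
    (α : L) (hroot : Polynomial.aeval α φ = 0) (hα : w α = ((1 : ℤ) : WithTop ℤ))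
    (hcompat : ∀ x : K, w (algebraMap K L x) = n • v x)
    -- the segment S with endpoints (p^sk, ak·n+bk), (p^sl, al·n+bl) and slope −h/e
    (sk sl si : ℕ) (ak al ai : ℤ) (bk bl bi : ℕ) (h e : ℕ)
    (hsk : sk ≤ si) (hsl : si ≤ sl) (hepos : 0 < e) (hcop : Nat.Coprime h e)
    (hend1 : w (rho φ α n (p ^ sk)) = ((ak * n + bk : ℤ) : WithTop ℤ))
    (hend2 : w (rho φ α n (p ^ sl)) = ((al * n + bl : ℤ) : WithTop ℤ))
    (hpti : w (rho φ α n (p ^ si)) = ((ai * n + bi : ℤ) : WithTop ℤ))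
    (hbi : bi ≠ 0) (hbilt : bi < n) (hbklt : bk < n) (hbllt : bl < n)
    -- the three points are collinear with slope −h/e
    (hline_i : (e : ℤ) * ((ak * n + bk) - (ai * n + bi)) = h * ((p : ℤ) ^ si - (p : ℤ) ^ sk))
    (hline_l : (e : ℤ) * ((ak * n + bk) - (al * n + bl)) = h * ((p : ℤ) ^ sl - (p : ℤ) ^ sk))
    -- the line supports the whole ramification polygon (S is a segment of it)
    (hsupp : ∀ m : ℕ, 1 ≤ m → m ≤ n → ∀ c : ℤ, w (rho φ α n m) = (c : WithTop ℤ) →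
      (e : ℤ) * (ak * n + bk) - h * ((m : ℤ) - (p : ℤ) ^ sk) ≤ (e : ℤ) * c)
    -- A is the residual polynomial of S
    (A : Polynomial 𝕜) (hAdeg : A.natDegree ≤ (p ^ sl - p ^ sk) / e)
    (hA : ∀ j ≤ (p ^ sl - p ^ sk) / e,
      0 < w (rho φ α n (j * e + p ^ sk) * α ^ ((j : ℤ) * h - (ak * n + bk)) -
        algebraMap K L (lift (A.coeff j))))
    -- the π-adic digits φ_{0,1} and φ_{b_i,j}
    (d01 : K) (hd01_int : 0 ≤ v d01)
    (hd01 : ((1 : ℤ) : WithTop ℤ) < v (φ.coeff 0 - d01 * π))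
    (cb : ℤ) (hcb : v ((Nat.choose bi (p ^ si) : K)) = (cb : WithTop ℤ))
    (db : K) (hdb_int : 0 ≤ v db)
    (hdb : ((ai + 1 - cb : ℤ) : WithTop ℤ) < v (φ.coeff bi - db * π ^ (ai + 1 - cb))) :
    vred v res db =
      A.coeff ((p ^ si - p ^ sk) / e) *
        vred v res (((Nat.choose bi (p ^ si) : K))⁻¹ * (-d01) ^ (ai + 1) * π ^ cb) := by
  classical
  obtain ⟨hmonic, hcoeffs, hconst⟩ := hEis
  set P := algebraMap K L with hP
  have hn1 : (1:ℤ) ≤ (n:ℤ) := by exact_mod_cast hn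
  have hα0 : α ≠ 0 := by
    rw [← w.ne_top_iff]
    rw [hα]
    exact WithTop.coe_ne_top
  have hπ0 : π ≠ 0 := by
    rw [← v.ne_top_iff]
    rw [hπ]
    exact WithTop.coe_ne_top
  have hvφ : ∀ i < n, ((1:ℤ) : WithTop ℤ) ≤ v (φ.coeff i) := by
    intro i hi
    exact hcoeffs i (by rwa [hdeg])
  -- the terms of the ramification polynomial coefficient ρ_{p^si}
  set g : ℕ → K := fun k => ((Nat.choose k (p ^ si) : K)) * φ.coeff k with hg
  set t : ℕ → L := fun k =>
    (Nat.choose k (p ^ si) : L) * (algebraMap K L (φ.coeff k)) * α ^ ((k:ℤ) - (n:ℤ)) with ht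
  have hrho : rho φ α n (p ^ si) = ∑ k ∈ Finset.Icc (p ^ si) n, t k := rfl
  have ht_eq : ∀ k, t k = P (g k) * α ^ ((k:ℤ) - (n:ℤ)) := by
    intro k
    simp only [ht, hg, hP, map_mul, map_natCast]
  have hw_t_coe : ∀ k, ∀ m : ℤ, v (g k) = (m : WithTop ℤ) →
      w (t k) = (((n:ℤ) * m + k - n : ℤ) : WithTop ℤ) := by
    intro k m hm
    rw [ht_eq, w.map_mul, hcompat, val_zpow w hα, hm, nsmul_coe]
    rw [show ((n:ℤ) * m + (k:ℤ) - (n:ℤ)) = ((n:ℕ) * m : ℤ) + ((k:ℤ) - (n:ℤ)) from by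
      push_cast; ring]
    exact (WithTop.coe_add _ _)
  have hw_t_top : ∀ k, v (g k) = ⊤ → w (t k) = ⊤ := by
    intro k hk
    rw [v.top_iff] at hk
    rw [ht_eq, hk, map_zero, zero_mul, w.map_zero]
  -- distinctness of term valuations
  have hdist : ∀ i ∈ Finset.Icc (p ^ si) n, ∀ j ∈ Finset.Icc (p ^ si) n,
      i ≠ j → w (t i) = w (t j) → w (t i) = ⊤ := by
    intro i hi j hj hne heq
    rcases eq_or_ne (v (g i)) ⊤ with hti | hti
    · exact hw_t_top i hti
    rcases eq_or_ne (v (g j)) ⊤ with htj | htj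
    · rw [heq]; exact hw_t_top j htj
    exfalso
    lift v (g i) to ℤ using hti with mi hmi
    lift v (g j) to ℤ using htj with mj hmj
    rw [hw_t_coe i mi hmi.symm, hw_t_coe j mj hmj.symm] at heq
    have heq' : (n:ℤ) * mi + i - n = (n:ℤ) * mj + j - n := by exact_mod_cast heq
    simp only [Finset.mem_Icc] at hi hj
    have hp1 : 1 ≤ p ^ si := Nat.one_le_pow _ _ hp.pos
    have hij : (i:ℤ) - j = (n:ℤ) * (mj - mi) := by ring_nf; linarith
    have h0 : (i:ℤ) - j = 0 := by
      refine int_eq_of_mul_bound (by exact_mod_cast hn) hij ?_ ?_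
      · have : 1 ≤ i := le_trans hp1 hi.1
        have : (j:ℤ) ≤ n := by exact_mod_cast hj.2
        omega
      · have : 1 ≤ j := le_trans hp1 hj.1
        have : (i:ℤ) ≤ n := by exact_mod_cast hi.2
        omega
    exact hne (by omega : i = j)
  -- locate the dominant term: it is the one with k = bi
  obtain ⟨i0, hi0mem, hi0val, hi0gt⟩ :=
    val_sum_unique w (Finset.Icc (p ^ si) n) t hdist (ai * n + bi) (hrho ▸ hpti)
  have hi0top : v (g i0) ≠ ⊤ := by
    intro htop
    rw [hw_t_top i0 htop] at hi0val
    exact WithTop.coe_ne_top hi0val.symm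
  lift v (g i0) to ℤ using hi0top with m0 hm0
  rw [hw_t_coe i0 m0 hm0.symm] at hi0val
  have heq0 : (n:ℤ) * m0 + i0 - n = ai * n + bi := by exact_mod_cast hi0val
  simp only [Finset.mem_Icc] at hi0mem
  have hp1 : 1 ≤ p ^ si := Nat.one_le_pow _ _ hp.pos
  have hi0lt : i0 < n := by
    rcases lt_or_eq_of_le hi0mem.2 with h' | h'
    · exact h'
    exfalso
    rw [h'] at heq0
    -- then bi ≡ 0 mod n, impossible
    have hh : (bi:ℤ) = (n:ℤ) * (m0 - ai) := by linarith
    have hbz : (bi:ℤ) = 0 := by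
      refine int_eq_of_mul_bound (by exact_mod_cast hn) hh ?_ ?_
      · have : (0:ℤ) ≤ bi := by exact_mod_cast Nat.zero_le bi
        omega
      · exact_mod_cast hbilt
    exact hbi (by exact_mod_cast hbz)
  have hm0ge : 1 ≤ m0 := by
    have h1 : ((1:ℤ) : WithTop ℤ) ≤ v (g i0) := by
      have hmm : v (g i0) = v ((Nat.choose i0 (p ^ si) : K)) + v (φ.coeff i0) :=
        v.map_mul _ _
      rw [hmm, show ((1:ℤ) : WithTop ℤ) = 0 + ((1:ℤ) : WithTop ℤ) from by rw [zero_add]]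
      exact add_le_add (val_natCast_nonneg v _) (hvφ i0 hi0lt)
    rw [← hm0] at h1
    exact_mod_cast h1
  have hi0bi : i0 = bi ∧ m0 = ai + 1 := by
    have hd : (i0:ℤ) - bi = (n:ℤ) * (ai + 1 - m0) := by linarith
    have h0 : (i0:ℤ) - bi = 0 := by
      refine int_eq_of_mul_bound (by exact_mod_cast hn) hd ?_ ?_
      · have h1 : 1 ≤ i0 := le_trans hp1 hi0mem.1
        have h2 : (bi:ℤ) < n := by exact_mod_cast hbilt
        omega
      · have h1 : 1 ≤ bi := Nat.one_le_iff_ne_zero.mpr hbi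
        have h2 : (i0:ℤ) < n := by exact_mod_cast hi0lt
        omega
    constructor
    · omega
    · have : (n:ℤ) * (ai + 1 - m0) = 0 := by omega
      have := mul_eq_zero.mp this
      rcases this with h' | h'
      · exact absurd h' (by exact_mod_cast hn.ne')
      · omega
  have hbi_ge : p ^ si ≤ bi := by
    have := hi0mem.1
    omega
  have hvgbi : v (g bi) = ((ai + 1 : ℤ) : WithTop ℤ) := by
    rw [show bi = i0 from hi0bi.1.symm ▸ rfl, ← hm0, hi0bi.2]
  have hgtbi : ∀ j' ∈ Finset.Icc (p ^ si) n, j' ≠ bi →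
      ((ai * n + bi : ℤ) : WithTop ℤ) < w (t j') := by
    intro j' hj' hne
    exact hi0gt j' hj' (by omega)
  have hwtbi : w (t bi) = ((ai * n + bi : ℤ) : WithTop ℤ) := by
    rw [hw_t_coe bi (ai + 1) hvgbi]
    congr 1
    ring
  have hai0 : 0 ≤ ai := by omega
  -- N = ai + 1 as a natural number
  set N : ℕ := ai.toNat + 1 with hNdef
  have hN : (N : ℤ) = ai + 1 := by
    rw [hNdef]
    push_cast
    rw [Int.toNat_of_nonneg hai0]
  -- the rest of the sum has strictly bigger valuation
  have hR : ((ai * n + bi : ℤ) : WithTop ℤ) < w (rho φ α n (p ^ si) - t bi) := by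
    have hsplit : rho φ α n (p ^ si) - t bi = ∑ k ∈ (Finset.Icc (p ^ si) n).erase bi, t k := by
      rw [hrho, ← Finset.add_sum_erase _ t (Finset.mem_Icc.mpr ⟨hbi_ge, le_of_lt hbilt⟩)]
      ring
    rw [hsplit]
    refine val_sum_lt w _ _ _ fun k hk => ?_
    exact hgtbi k (Finset.mem_of_mem_erase hk) (Finset.ne_of_mem_erase hk)
  -- arithmetic of the segment: j := (p^si - p^sk)/e
  have hpsk_le : p ^ sk ≤ p ^ si := Nat.pow_le_pow_right hp.pos hsk
  have hpsl_ge : p ^ si ≤ p ^ sl := Nat.pow_le_pow_right hp.pos hsl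
  have hcop' : IsCoprime (e : ℤ) (h : ℤ) := by
    rw [Int.isCoprime_iff_gcd_eq_one, Int.gcd_natCast_natCast]
    exact hcop.symm
  have hDdvd : (e : ℤ) ∣ ((p:ℤ) ^ si - (p:ℤ) ^ sk) :=
    hcop'.dvd_of_dvd_mul_left ⟨_, hline_i.symm⟩
  have hDnat : e ∣ p ^ si - p ^ sk := by
    have : ((p ^ si - p ^ sk : ℕ) : ℤ) = (p:ℤ) ^ si - (p:ℤ) ^ sk := by
      push_cast [Nat.cast_sub hpsk_le]
      ring
    rw [← Int.natCast_dvd_natCast, this]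
    exact hDdvd
  set j : ℕ := (p ^ si - p ^ sk) / e with hjdef
  have hje : j * e = p ^ si - p ^ sk := Nat.div_mul_cancel hDnat
  have hjE : j * e + p ^ sk = p ^ si := by omega
  have hjle : j ≤ (p ^ sl - p ^ sk) / e :=
    Nat.div_le_div_right (Nat.sub_le_sub_right hpsl_ge _)
  have hjh : (j : ℤ) * h - (ak * n + bk) = -(ai * n + bi) := by
    have h1 : (e:ℤ) * ((ak * n + bk) - (ai * n + bi)) = (h:ℤ) * ((j:ℤ) * e) := by
      rw [hline_i]
      have : ((j * e : ℕ) : ℤ) = (p:ℤ) ^ si - (p:ℤ) ^ sk := by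
        rw [hje]
        push_cast [Nat.cast_sub hpsk_le]
        ring
      push_cast at this
      rw [← this]
    have h2 : (e:ℤ) * ((ak * n + bk) - (ai * n + bi)) = (e:ℤ) * ((h:ℤ) * j) := by
      rw [h1]; ring
    have h3 : (ak * n + bk) - (ai * n + bi) = (h:ℤ) * j :=
      mul_left_cancel₀ (by exact_mod_cast hepos.ne' : (e:ℤ) ≠ 0) h2
    linarith
  -- the residual polynomial congruence at the point p^si
  have hA2 : 0 < w (rho φ α n (p ^ si) * α ^ (-(ai * n + bi : ℤ)) - P (lift (A.coeff j))) := by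
    have := hA j hjle
    rw [hjE, hjh] at this
    exact this
  -- transfer it to the single term t bi
  have h2 : (((0:ℤ)) : WithTop ℤ) <
      w (t bi * α ^ (-(ai * n + bi : ℤ)) - P (lift (A.coeff j))) := by
    have hid : t bi * α ^ (-(ai * n + bi : ℤ)) - P (lift (A.coeff j)) =
        (t bi - rho φ α n (p ^ si)) * α ^ (-(ai * n + bi : ℤ)) +
          (rho φ α n (p ^ si) * α ^ (-(ai * n + bi : ℤ)) - P (lift (A.coeff j))) := by
      ring
    rw [hid]
    refine val_add_lt w ?_ ?_
    · rw [w.map_mul, val_zpow w hα]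
      rw [w.map_sub_swap]
      have := coe_add_lt' (a := -(ai * n + bi)) hR
      rw [show (ai * ↑n + ↑bi + -(ai * ↑n + ↑bi) : ℤ) = 0 from by ring] at this
      exact this
    · exact_mod_cast hA2
  -- multiply by α^{(ai+1)n}
  have h3 : (((N:ℤ) * n : ℤ) : WithTop ℤ) <
      w (P (g bi) - P (lift (A.coeff j)) * α ^ ((N:ℤ) * n)) := by
    have hexp : ((bi:ℤ) - n) + (-(ai * n + bi : ℤ)) + (N:ℤ) * n = 0 := by
      rw [hN]; ring
    have hid : P (g bi) - P (lift (A.coeff j)) * α ^ ((N:ℤ) * n) =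
        (t bi * α ^ (-(ai * n + bi : ℤ)) - P (lift (A.coeff j))) * α ^ ((N:ℤ) * n) := by
      rw [ht_eq]
      rw [sub_mul, mul_assoc, mul_assoc, ← zpow_add₀ hα0, ← zpow_add₀ hα0,
        show ((bi:ℤ) - n + (-(ai * n + bi : ℤ) + (N:ℤ) * n)) = 0 from by rw [hN]; ring,
        zpow_zero, mul_one]
    rw [hid, w.map_mul, val_zpow w hα]
    have := coe_add_lt' (a := (N:ℤ) * n) h2
    rw [show ((0:ℤ) + (N:ℤ) * n : ℤ) = (N:ℤ) * n from by ring] at this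
    exact this
  -- first digit of the constant coefficient is a unit
  have hd01v : v d01 = ((0:ℤ) : WithTop ℤ) := by
    by_contra hne
    have hpos : ((0:ℤ) : WithTop ℤ) < v d01 := lt_of_le_of_ne (by exact_mod_cast hd01_int)
      (fun hh => hne hh.symm)
    have h1 : ((1:ℤ) : WithTop ℤ) < v (d01 * π) := by
      rw [v.map_mul, hπ]
      have := coe_add_lt' (a := (1:ℤ)) hpos
      rw [show ((0:ℤ) + 1 : ℤ) = 1 from by ring] at this
      exact this
    have h2' : v (φ.coeff 0 - d01 * π) = ((1:ℤ) : WithTop ℤ) := by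
      rw [AddValuation.map_sub_eq_of_lt_left v (by rw [hconst]; exact_mod_cast h1)]
      exact hconst
    rw [h2'] at hd01
    exact lt_irrefl _ hd01
  -- the congruence α^n ≡ -φ₀ ≡ -d01·π
  have hy : v (-(d01 * π)) = ((1:ℤ) : WithTop ℤ) := by
    rw [v.map_neg, v.map_mul, hd01v, hπ]
    exact_mod_cast rfl
  have hαn : (((n:ℤ)) : WithTop ℤ) < w (α ^ (n:ℕ) - P (-(d01 * π))) := by
    have hsum0 : α ^ (n:ℕ) + ∑ i ∈ Finset.range n, P (φ.coeff i) * α ^ i = 0 := by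
      have hlc : φ.coeff n = 1 := by
        have := hmonic.coeff_natDegree
        rwa [hdeg] at this
      have h0 := hroot
      rw [Polynomial.aeval_eq_sum_range, hdeg, Finset.sum_range_succ, hlc, one_smul] at h0
      rw [← h0, add_comm]
      congr 1
      refine Finset.sum_congr rfl fun i _ => ?_
      exact (Algebra.smul_def _ _).symm
    have hsplit : ∑ i ∈ Finset.range n, P (φ.coeff i) * α ^ i =
        P (φ.coeff 0) + ∑ i ∈ Finset.Ico 1 n, P (φ.coeff i) * α ^ i := by
      rw [Finset.range_eq_Ico, Finset.sum_eq_sum_Ico_succ_bot hn]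
      simp
    have hident : α ^ (n:ℕ) - P (-(d01 * π)) =
        -(P (φ.coeff 0 - d01 * π)) - ∑ i ∈ Finset.Ico 1 n, P (φ.coeff i) * α ^ i := by
      rw [hsplit] at hsum0
      rw [map_neg, map_sub]
      linear_combination hsum0
    rw [hident]
    refine val_sub_lt w ?_ ?_
    · rw [w.map_neg, hcompat]
      have h2le : ((2:ℤ) : WithTop ℤ) ≤ v (φ.coeff 0 - d01 * π) := by
        have := coe_add_one_le hd01
        exact_mod_cast this
      have := le_nsmul n h2le
      refine lt_of_lt_of_le ?_ this
      exact_mod_cast (by omega : (n:ℤ) < n * 2)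
    · refine val_sum_lt w _ _ _ fun i hi => ?_
      simp only [Finset.mem_Ico] at hi
      rw [w.map_mul, hcompat, w.map_pow, hα, nsmul_coe]
      have hv1 : ((n * 1 : ℤ) : WithTop ℤ) ≤ n • v (φ.coeff i) := le_nsmul n (hvφ i hi.2)
      have := coe_add_le hv1 (le_refl ((i * 1 : ℤ) : WithTop ℤ))
      refine lt_of_lt_of_le ?_ this
      have h1i : 1 ≤ i := hi.1
      exact_mod_cast (by push_cast; omega : (n:ℤ) < n * 1 + i * 1)
  -- powers: α^{nN} ≡ (-d01 π)^N
  have hwαn : w (α ^ (n:ℕ)) = ((n:ℤ) : WithTop ℤ) := by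
    rw [w.map_pow, hα, nsmul_coe]
    norm_num
  have hwy : w (P (-(d01 * π))) = ((n:ℤ) : WithTop ℤ) := by
    rw [hcompat, hy, nsmul_coe]
    norm_num
  have hpow : (((N:ℤ) * n : ℤ) : WithTop ℤ) <
      w ((α ^ (n:ℕ)) ^ N - (P (-(d01 * π))) ^ N) := by
    have := val_pow_sub_pow w hwαn hwy hαn N (by omega)
    rwa [show ((N:ℕ) * (n:ℤ) : ℤ) = (N:ℤ) * n from by push_cast; ring] at this
  -- combine: C·φ_bi ≡ lift(A_j)·(-d01 π)^N
  have hcomb : (((N:ℤ) * n : ℤ) : WithTop ℤ) <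
      w (P (g bi - lift (A.coeff j) * (-(d01 * π)) ^ N)) := by
    have hzp : α ^ ((N:ℤ) * n) = (α ^ (n:ℕ)) ^ N := by
      rw [← pow_mul, ← zpow_natCast α (n * N)]
      congr 1
      push_cast
      ring
    have hid : P (g bi - lift (A.coeff j) * (-(d01 * π)) ^ N) =
        (P (g bi) - P (lift (A.coeff j)) * α ^ ((N:ℤ) * n)) +
          P (lift (A.coeff j)) * ((α ^ (n:ℕ)) ^ N - (P (-(d01 * π))) ^ N) := by
      simp only [map_sub, map_mul, map_pow]
      rw [hzp]
      ring
    rw [hid]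
    refine val_add_lt w h3 ?_
    rw [w.map_mul, hcompat]
    have hv0 : ((0:ℤ) : WithTop ℤ) ≤ n • v (lift (A.coeff j)) := by
      have := le_nsmul n (show ((0:ℤ) : WithTop ℤ) ≤ v (lift (A.coeff j)) from by
        exact_mod_cast hlift_int (A.coeff j))
      rwa [show ((n : ℕ) * (0:ℤ) : ℤ) = 0 from by ring] at this
    calc (((N:ℤ) * n : ℤ) : WithTop ℤ)
        = ((0 + (N:ℤ) * n : ℤ) : WithTop ℤ) := by norm_num
      _ < n • v (lift (A.coeff j)) + w ((α ^ (n:ℕ)) ^ N - (P (-(d01 * π))) ^ N) := by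
          rcases eq_or_lt_of_le hv0 with h' | h'
          · rw [← h']
            exact coe_add_lt hpow
          · calc ((0 + (N:ℤ) * n : ℤ) : WithTop ℤ)
                < n • v (lift (A.coeff j)) + (((N:ℤ) * n : ℤ) : WithTop ℤ) := by
                  exact coe_add_lt' h'
              _ ≤ _ := add_le_add le_rfl hpow.le
  -- transfer to K
  have hKv : (((N:ℤ)) : WithTop ℤ) <
      v (g bi - lift (A.coeff j) * (-(d01 * π)) ^ N) := by
    rw [hcompat] at hcomb
    exact nsmul_reflect hn (by rwa [show ((N:ℤ) * (n:ℤ) : ℤ) = (N:ℤ) * n from rfl] at hcomb)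
  -- divide by the binomial coefficient
  have hCne : ((Nat.choose bi (p ^ si) : K)) ≠ 0 := by
    rw [← v.ne_top_iff, hcb]
    exact WithTop.coe_ne_top
  have hCinv : v (((Nat.choose bi (p ^ si) : K))⁻¹) = ((-cb : ℤ) : WithTop ℤ) := by
    rw [v.map_inv, hcb, ← WithTop.LinearOrderedAddCommGroup.coe_neg]
  have hphi : ((ai + 1 - cb : ℤ) : WithTop ℤ) <
      v (φ.coeff bi - ((Nat.choose bi (p ^ si) : K))⁻¹ *
        (lift (A.coeff j) * (-(d01 * π)) ^ N)) := by
    have hgbi : g bi = ((Nat.choose bi (p ^ si) : K)) * φ.coeff bi := rfl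
    have hid : φ.coeff bi - ((Nat.choose bi (p ^ si) : K))⁻¹ *
        (lift (A.coeff j) * (-(d01 * π)) ^ N) =
        ((Nat.choose bi (p ^ si) : K))⁻¹ *
          (g bi - lift (A.coeff j) * (-(d01 * π)) ^ N) := by
      rw [hgbi]
      field_simp
    rw [hid, v.map_mul, hCinv]
    have := coe_add_lt (a := -cb) hKv
    rwa [show (-cb + (N:ℤ) : ℤ) = ai + 1 - cb from by rw [hN]; ring] at this
  -- compare with the digit db
  have hdbj : ((ai + 1 - cb : ℤ) : WithTop ℤ) <
      v (db * π ^ (ai + 1 - cb) - ((Nat.choose bi (p ^ si) : K))⁻¹ *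
        (lift (A.coeff j) * (-(d01 * π)) ^ N)) := by
    have hid : db * π ^ (ai + 1 - cb) - ((Nat.choose bi (p ^ si) : K))⁻¹ *
        (lift (A.coeff j) * (-(d01 * π)) ^ N) =
        (φ.coeff bi - ((Nat.choose bi (p ^ si) : K))⁻¹ *
          (lift (A.coeff j) * (-(d01 * π)) ^ N)) -
        (φ.coeff bi - db * π ^ (ai + 1 - cb)) := by ring
    rw [hid]
    exact val_sub_lt v hphi hdb
  -- divide by π^{ai+1-cb}
  have hfinal : ((0:ℤ) : WithTop ℤ) < v (db - lift (A.coeff j) *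
      (((Nat.choose bi (p ^ si) : K))⁻¹ * (-d01) ^ (ai + 1) * π ^ cb)) := by
    have e1 : (-(d01 * π) : K) ^ N = (-d01) ^ N * π ^ N := by
      rw [← neg_mul, mul_pow]
    have e2 : (-d01 : K) ^ (ai + 1) = (-d01) ^ N := by
      rw [← hN, zpow_natCast]
    have e3 : (π : K) ^ (N : ℕ) = π ^ (ai + 1 - cb) * π ^ (cb : ℤ) := by
      rw [← zpow_natCast π N, ← zpow_add₀ hπ0]
      congr 1
      rw [hN]
      ring
    have hππ : (π : K) ^ (ai + 1 - cb) * π ^ (-(ai + 1 - cb)) = 1 := by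
      rw [← zpow_add₀ hπ0]
      simp
    have hid : db - lift (A.coeff j) *
        (((Nat.choose bi (p ^ si) : K))⁻¹ * (-d01) ^ (ai + 1) * π ^ cb) =
        (db * π ^ (ai + 1 - cb) - ((Nat.choose bi (p ^ si) : K))⁻¹ *
          (lift (A.coeff j) * (-(d01 * π)) ^ N)) * π ^ (-(ai + 1 - cb)) := by
      calc db - lift (A.coeff j) *
            (((Nat.choose bi (p ^ si) : K))⁻¹ * (-d01) ^ (ai + 1) * π ^ cb)
          = db * 1 - lift (A.coeff j) *
            (((Nat.choose bi (p ^ si) : K))⁻¹ * (-d01) ^ N * (1 * π ^ cb)) := by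
            rw [e2, one_mul, mul_one]
        _ = db * (π ^ (ai + 1 - cb) * π ^ (-(ai + 1 - cb))) - lift (A.coeff j) *
            (((Nat.choose bi (p ^ si) : K))⁻¹ * (-d01) ^ N *
              ((π ^ (ai + 1 - cb) * π ^ (-(ai + 1 - cb))) * π ^ cb)) := by rw [hππ]
        _ = (db * π ^ (ai + 1 - cb) - ((Nat.choose bi (p ^ si) : K))⁻¹ *
            (lift (A.coeff j) * ((-d01) ^ N * (π ^ (ai + 1 - cb) * π ^ cb)))) *
              π ^ (-(ai + 1 - cb)) := by ring
        _ = _ := by rw [← e3, ← e1]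
    rw [hid, v.map_mul, val_zpow v hπ]
    have := coe_add_lt' (a := -(ai + 1 - cb)) hdbj
    rwa [show (ai + 1 - cb + -(ai + 1 - cb) : ℤ) = 0 from by ring] at this
  -- pass to the residue field
  have hvneg : v (-d01) = ((0:ℤ) : WithTop ℤ) := by rw [v.map_neg]; exact hd01v
  have hvu : v (((Nat.choose bi (p ^ si) : K))⁻¹ * (-d01) ^ (ai + 1) * π ^ cb) =
      ((0:ℤ) : WithTop ℤ) := by
    rw [v.map_mul, v.map_mul, hCinv, val_zpow_zero v hvneg, val_zpow v hπ]
    rw [show ((-cb : ℤ) : WithTop ℤ) + ((0:ℤ) : WithTop ℤ) = ((-cb + 0 : ℤ) : WithTop ℤ) from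
      (WithTop.coe_add _ _).symm]
    rw [show ((-cb + 0 : ℤ) : WithTop ℤ) + ((cb : ℤ) : WithTop ℤ) =
      ((-cb + 0 + cb : ℤ) : WithTop ℤ) from (WithTop.coe_add _ _).symm]
    norm_num
  have hdb_mem : db ∈ vintegers v := hdb_int
  have hu_mem : ((Nat.choose bi (p ^ si) : K))⁻¹ * (-d01) ^ (ai + 1) * π ^ cb ∈
      vintegers v := by
    show 0 ≤ v _
    rw [hvu]
    exact_mod_cast le_refl (0:ℤ)
  have hlm : lift (A.coeff j) ∈ vintegers v := hlift_int _
  have hlu_mem : lift (A.coeff j) *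
      (((Nat.choose bi (p ^ si) : K))⁻¹ * (-d01) ^ (ai + 1) * π ^ cb) ∈ vintegers v :=
    (vintegers v).mul_mem hlm hu_mem
  have hres_eq : res ⟨db, hdb_mem⟩ = res ⟨_, hlu_mem⟩ := by
    have hker : res (⟨db, hdb_mem⟩ - ⟨_, hlu_mem⟩) = 0 := by
      rw [hres_ker]
      show (0 : WithTop ℤ) < v (db - _)
      exact_mod_cast hfinal
    rw [map_sub] at hker
    exact sub_eq_zero.mp hker
  have hres_mul : res ⟨_, hlu_mem⟩ = res ⟨_, hlm⟩ * res ⟨_, hu_mem⟩ := by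
    rw [← map_mul]
    rfl
  have hres_lift : res ⟨lift (A.coeff j), hlm⟩ = A.coeff j := by
    have := hlift_sect (A.coeff j)
    unfold vred at this
    rwa [dif_pos hlm] at this
  show vred v res db = A.coeff j * vred v res _
  unfold vred
  rw [dif_pos hdb_mem, dif_pos hu_mem, hres_eq, hres_mul, hres_lift]
end
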